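/- arXiv:2301.02220 — 3 statements merged into one kernel-verified Lean document; each statement's English description precedes it below -/
import Mathlib

section
/- Proposition 1, case (B3): suppose in the estimating-function setup that Ã = A^{π_old} and ω̃ = ω^{π_old}, while Ṽ : S → ℝ is arbitrary and d̃ is an arbitrary family of probability mass functions d̃(·|a,s) on S. Then E[ψ(O)] = η₁(π, π_old). -/
namespace VEPO

variable {S A : Type} [Fintype S] [Fintype A] [DecidableEq S] [DecidableEq A]

/-- A probability mass function on a finite type, represented as a real-valued function. -/
def IsPMF {X : Type} [Fintype X] (f : X → ℝ) : Prop :=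
  (∀ x, 0 ≤ f x) ∧ ∑ x : X, f x = 1

/-- A transition kernel: for each action-state pair `(a, s)`, a pmf `p a s` on next states. -/
def IsKernel (p : A → S → S → ℝ) : Prop := ∀ a s, IsPMF (p a s)

/-- A policy: for each state `s`, a pmf `π s` on actions. -/
def IsPolicy (π : S → A → ℝ) : Prop := ∀ s, IsPMF (π s)

/-- The `t`-step visitation probability `p_t^π(s' | a, s)`. -/
def visit (p : A → S → S → ℝ) (π : S → A → ℝ) : ℕ → A → S → S → ℝ
  | 0, _, s, s' => if s' = s then 1 else 0
  | 1, a, s, s' => p a s s'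
  | (t + 2), a, s, s' =>
      ∑ s'' : S, visit p π (t + 1) a s s'' * ∑ a'' : A, π s'' a'' * p a'' s'' s'

/-- The Q-function `Q^π(a, s)`. -/
noncomputable def Qfun (p : A → S → S → ℝ) (r : S → A → ℝ) (γ : ℝ)
    (π : S → A → ℝ) (a : A) (s : S) : ℝ :=
  r s a + ∑' t : ℕ, γ ^ (t + 1) *
    ∑ s' : S, visit p π (t + 1) a s s' * ∑ a' : A, π s' a' * r s' a'

/-- The value function `V^π(s)`. -/
noncomputable def Vfun (p : A → S → S → ℝ) (r : S → A → ℝ) (γ : ℝ)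
    (π : S → A → ℝ) (s : S) : ℝ :=
  ∑ a : A, π s a * Qfun p r γ π a s

/-- The advantage function `A^π(a, s)`. -/
noncomputable def Adv (p : A → S → S → ℝ) (r : S → A → ℝ) (γ : ℝ)
    (π : S → A → ℝ) (a : A) (s : S) : ℝ :=
  Qfun p r γ π a s - Vfun p r γ π s

/-- The conditional discounted visitation probability `d^π(s' | a, s)`. -/
noncomputable def dvisit (p : A → S → S → ℝ) (γ : ℝ) (π : S → A → ℝ)
    (s' : S) (a : A) (s : S) : ℝ :=
  (1 - γ) * ∑' t : ℕ, γ ^ t * visit p π t a s s'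

/-- The integrated discounted visitation probability `d^{π,ν}(s')`. -/
noncomputable def dnu (p : A → S → S → ℝ) (γ : ℝ) (ν : S → ℝ)
    (π : S → A → ℝ) (s' : S) : ℝ :=
  ∑ s : S, ∑ a : A, π s a * ν s * dvisit p γ π s' a s

/-- The integrated value `V(π) = Σ_s ν(s) V^π(s)`. -/
noncomputable def IntV (p : A → S → S → ℝ) (r : S → A → ℝ) (γ : ℝ) (ν : S → ℝ)
    (π : S → A → ℝ) : ℝ :=
  ∑ s : S, ν s * Vfun p r γ π s

/-- The first-order term `η₁(π₁, π₂)`. -/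
noncomputable def eta1 (p : A → S → S → ℝ) (r : S → A → ℝ) (γ : ℝ) (ν : S → ℝ)
    (π₁ π₂ : S → A → ℝ) : ℝ :=
  ∑ a : A, ∑ s : S, π₁ s a * Adv p r γ π₂ a s * dnu p γ ν π₂ s

/-- The higher-order remainder `η₂(π₁, π₂)`. -/
noncomputable def eta2 (p : A → S → S → ℝ) (r : S → A → ℝ) (γ : ℝ) (ν : S → ℝ)
    (π₁ π₂ : S → A → ℝ) : ℝ :=
  ∑ a : A, ∑ s : S, (π₁ s a - π₂ s a) * Adv p r γ π₂ a s *
    (dnu p γ ν π₁ s - dnu p γ ν π₂ s)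

/-- Total variation distance between two pmfs on a finite type. -/
noncomputable def DTV {X : Type} [Fintype X] (μ₁ μ₂ : X → ℝ) : ℝ :=
  (1 / 2) * ∑ x : X, |μ₁ x - μ₂ x|

/-- Kullback–Leibler divergence between two pmfs on a finite type, valued in `EReal`
(equal to `⊤` if `μ₁` is not absolutely continuous w.r.t. `μ₂`). -/
noncomputable def DKL {X : Type} [Fintype X] (μ₁ μ₂ : X → ℝ) : EReal :=
  ∑ x : X, (if μ₁ x = 0 then (0 : EReal)
    else if μ₂ x = 0 then (⊤ : EReal)
    else ((μ₁ x * Real.log (μ₁ x / μ₂ x) : ℝ) : EReal))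

/-- Conditional discounted stationary probability ratio `ω^π(a', s'; a, s)`. -/
noncomputable def ratio (p : A → S → S → ℝ) (γ : ℝ) (pinf : A → S → ℝ)
    (π : S → A → ℝ) (a' : A) (s' : S) (a : A) (s : S) : ℝ :=
  (1 - γ) * ((if a' = a ∧ s' = s then 1 else 0) +
    ∑' t : ℕ, γ ^ (t + 1) * (π s' a' * visit p π (t + 1) a s s')) / pinf a' s'

/-- Integrated discounted stationary probability ratio `ω^{π,ν}(a', s')`. -/
noncomputable def rationu (p : A → S → S → ℝ) (γ : ℝ) (pinf : A → S → ℝ) (ν : S → ℝ)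
    (π : S → A → ℝ) (a' : A) (s' : S) : ℝ :=
  ∑ a : A, ∑ s : S, π s a * ν s * ratio p γ pinf π a' s' a s

/-- Marginal state distribution `p̄_t^{π,ν}` at time `t` when `S₀ ~ ν` and actions follow `π`. -/
def marg (p : A → S → S → ℝ) (π : S → A → ℝ) (ν : S → ℝ) : ℕ → S → ℝ
  | 0, s' => ν s'
  | (t + 1), s' => ∑ s : S, marg p π ν t s * ∑ a : A, π s a * p a s s'

/-- Conditional discounted state–action visitation `q^π(a', s'; a, s)`. -/
noncomputable def qvisit (p : A → S → S → ℝ) (γ : ℝ) (π : S → A → ℝ)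
    (a' : A) (s' : S) (a : A) (s : S) : ℝ :=
  (1 - γ) * ((if a' = a ∧ s' = s then 1 else 0) +
    ∑' t : ℕ, γ ^ (t + 1) * (π s' a' * visit p π (t + 1) a s s'))

/-- The estimating function `ψ(o) = ψ₁ + ψ₂(o) + ψ₃(o)` evaluated at a data tuple
`o = (s, a, rr, s')`, for nuisance functions `Ṽ = Vt`, `Ã = At`, `ω̃ = ωt`
(with `ωt a' s' a s = ω̃(a',s'; a,s)`) and `d̃ = dt` (with `dt s* a s = d̃(s* | a, s)`). -/
noncomputable def psi (γ : ℝ) (ν : S → ℝ) (π πold : S → A → ℝ)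
    (Vt : S → ℝ) (At : A → S → ℝ) (ωt : A → S → A → S → ℝ) (dt : S → A → S → ℝ)
    (s : S) (a : A) (rr : ℝ) (s' : S) : ℝ :=
  let dtnu : S → ℝ := fun sstar => ∑ a0 : A, ∑ s0 : S, πold s0 a0 * ν s0 * dt sstar a0 s0
  let ωtnu : A → S → ℝ := fun a1 s1 => ∑ a0 : A, ∑ s0 : S, πold s0 a0 * ν s0 * ωt a1 s1 a0 s0
  (∑ sstar : S, dtnu sstar * ∑ astar : A, π sstar astar * At astar sstar)
  + (1 / (1 - γ)) * ∑ sstar : S, dtnu sstar * ∑ astar : A,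
      (π sstar astar - πold sstar astar) * ωt a s astar sstar *
        (rr + γ * Vt s' - Vt s - At a s)
  + (ωtnu a s / (1 - γ)) * ∑ astar : A,
      (γ * ∑ a' : A, πold s' a' * ∑ sstar : S, dt sstar a' s' * π sstar astar * At astar sstar
       - ∑ sstar : S, dt sstar a s * π sstar astar * At astar sstar
       + (1 - γ) * π s astar * At astar s)

/-- The expectation `E[ψ(O)]` of the estimating function, where `(A₀, S₀) ~ p_∞`,
`S₁ | (A₀, S₀) ~ p(· | A₀, S₀)` and `E[R₀ | A₀, S₀] = r(S₀, A₀)`;  since `ψ` is affine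
in its reward argument with a coefficient not depending on `s'`, this finite sum is
exactly the expectation of `ψ(O)`. -/
noncomputable def Epsi (p : A → S → S → ℝ) (r : S → A → ℝ) (γ : ℝ) (ν : S → ℝ)
    (pinf : A → S → ℝ) (π πold : S → A → ℝ)
    (Vt : S → ℝ) (At : A → S → ℝ) (ωt : A → S → A → S → ℝ) (dt : S → A → S → ℝ) : ℝ :=
  ∑ a : A, ∑ s : S, pinf a s * ∑ s' : S, p a s s' *
    psi γ ν π πold Vt At ωt dt s a (r s a) s'

set_option linter.unusedSectionVars false

section Aux

variable {S A : Type} [Fintype S] [Fintype A] [DecidableEq S] [DecidableEq A]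

lemma pmf_le_one {X : Type} [Fintype X] {f : X → ℝ} (hf : IsPMF f) (x : X) : f x ≤ 1 := by
  have := Finset.single_le_sum (f := f) (fun i _ => hf.1 i) (Finset.mem_univ x)
  simpa [hf.2] using this

lemma visit_two (p : A → S → S → ℝ) (π : S → A → ℝ) (t : ℕ) (a : A) (s s' : S) :
    visit p π (t + 2) a s s' =
      ∑ s'' : S, visit p π (t + 1) a s s'' * ∑ a'' : A, π s'' a'' * p a'' s'' s' := rfl

variable {p : A → S → S → ℝ} {πold : S → A → ℝ} {γ : ℝ}

lemma visit_nonneg (hp : IsKernel p) (hold : IsPolicy πold) (t : ℕ) :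
    ∀ a s s', 0 ≤ visit p πold t a s s' := by
  induction t with
  | zero => intro a s s'; simp only [visit]; split <;> norm_num
  | succ n ih =>
    match n with
    | 0 => exact fun a s s' => (hp a s).1 s'
    | m + 1 =>
      intro a s s'
      show 0 ≤ visit p πold (m + 2) a s s'
      rw [visit_two]
      refine Finset.sum_nonneg fun s'' _ => mul_nonneg (ih a s s'') ?_
      exact Finset.sum_nonneg fun a'' _ => mul_nonneg ((hold s'').1 a'') ((hp a'' s'').1 s')

lemma visit_sum_one (hp : IsKernel p) (hold : IsPolicy πold) (t : ℕ) :
    ∀ a s, ∑ s' : S, visit p πold t a s s' = 1 := by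
  induction t with
  | zero => intro a s; simp [visit]
  | succ n ih =>
    match n with
    | 0 => exact fun a s => (hp a s).2
    | m + 1 =>
      intro a s
      show ∑ s' : S, visit p πold (m + 2) a s s' = 1
      simp_rw [visit_two]
      rw [Finset.sum_comm]
      have h1 : ∀ s'' : S, ∑ s' : S, visit p πold (m+1) a s s'' * ∑ a'' : A, πold s'' a'' * p a'' s'' s'
          = visit p πold (m+1) a s s'' := by
        intro s''
        rw [← Finset.mul_sum]
        have h2 : ∑ s' : S, ∑ a'' : A, πold s'' a'' * p a'' s'' s' = 1 := by
          rw [Finset.sum_comm]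
          have h3 : ∀ a'' : A, ∑ s' : S, πold s'' a'' * p a'' s'' s' = πold s'' a'' := by
            intro a''; rw [← Finset.mul_sum, (hp a'' s'').2, mul_one]
          rw [Finset.sum_congr rfl fun a'' _ => h3 a'', (hold s'').2]
        rw [h2, mul_one]
      rw [Finset.sum_congr rfl fun s'' _ => h1 s'', ih a s]

lemma visit_le_one (hp : IsKernel p) (hold : IsPolicy πold) (t : ℕ) (a : A) (s s' : S) :
    visit p πold t a s s' ≤ 1 := by
  calc visit p πold t a s s' ≤ ∑ s'' : S, visit p πold t a s s'' :=
        Finset.single_le_sum (fun s'' _ => visit_nonneg hp hold t a s s'') (Finset.mem_univ s')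
  _ = 1 := visit_sum_one hp hold t a s

lemma summable_geom_bound (hγ0 : 0 ≤ γ) (hγ1 : γ < 1) (c : ℕ → ℝ) (C : ℝ)
    (hc : ∀ t, |c t| ≤ C) : Summable fun t => γ ^ t * c t := by
  apply Summable.of_abs
  refine Summable.of_nonneg_of_le (fun t => abs_nonneg _) (fun t => ?_)
    ((summable_geometric_of_lt_one hγ0 hγ1).mul_right C)
  rw [abs_mul, abs_pow, abs_of_nonneg hγ0]
  exact mul_le_mul_of_nonneg_left (hc t) (pow_nonneg hγ0 t)

lemma summable_shift (hγ0 : 0 ≤ γ) (hγ1 : γ < 1) (c : ℕ → ℝ) (C : ℝ)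
    (hc : ∀ t, |c t| ≤ C) : Summable fun t => γ ^ (t + 1) * c t := by
  have h := summable_geom_bound hγ0 hγ1 (fun t => γ * c t) (γ * C) (fun t => by
    rw [abs_mul, abs_of_nonneg hγ0]
    exact mul_le_mul_of_nonneg_left (hc t) hγ0)
  refine h.congr fun t => ?_
  rw [pow_succ]; ring

end Aux
section Aux2

variable {S A : Type} [Fintype S] [Fintype A] [DecidableEq S] [DecidableEq A]

/-- `MM f t` is the expectation of `f(A_t,S_t)` in the chain started at `(a0,s0)`
following `πold`. -/
noncomputable def MM (p : A → S → S → ℝ) (πold : S → A → ℝ) (f : A → S → ℝ)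
    (a0 : A) (s0 : S) : ℕ → ℝ
  | 0 => f a0 s0
  | (t + 1) => ∑ s : S, visit p πold (t + 1) a0 s0 s * ∑ a : A, πold s a * f a s

lemma MM_zero (p : A → S → S → ℝ) (πold : S → A → ℝ) (f : A → S → ℝ) (a0 : A) (s0 : S) :
    MM p πold f a0 s0 0 = f a0 s0 := rfl

lemma MM_succ (p : A → S → S → ℝ) (πold : S → A → ℝ) (f : A → S → ℝ) (a0 : A) (s0 : S) (t : ℕ) :
    MM p πold f a0 s0 (t + 1)
      = ∑ s : S, visit p πold (t + 1) a0 s0 s * ∑ a : A, πold s a * f a s := rfl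

variable {p : A → S → S → ℝ} {πold : S → A → ℝ} {γ : ℝ}

lemma MM_bound (hp : IsKernel p) (hold : IsPolicy πold) (f : A → S → ℝ) (a0 : A) (s0 : S)
    (t : ℕ) : |MM p πold f a0 s0 t| ≤ ∑ s : S, ∑ a : A, |f a s| := by
  match t with
  | 0 =>
    rw [MM_zero]
    calc |f a0 s0| ≤ ∑ a : A, |f a s0| :=
          Finset.single_le_sum (f := fun a => |f a s0|) (fun a _ => abs_nonneg _) (Finset.mem_univ a0)
    _ ≤ ∑ s : S, ∑ a : A, |f a s| :=
          Finset.single_le_sum (f := fun s => ∑ a : A, |f a s|)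
            (fun s _ => Finset.sum_nonneg fun a _ => abs_nonneg _) (Finset.mem_univ s0)
  | t + 1 =>
    rw [MM_succ]
    calc |∑ s : S, visit p πold (t+1) a0 s0 s * ∑ a : A, πold s a * f a s|
        ≤ ∑ s : S, |visit p πold (t+1) a0 s0 s * ∑ a : A, πold s a * f a s| :=
          Finset.abs_sum_le_sum_abs _ _
    _ ≤ ∑ s : S, ∑ a : A, |f a s| := by
        refine Finset.sum_le_sum fun s _ => ?_
        rw [abs_mul]
        have h1 : |visit p πold (t+1) a0 s0 s| ≤ 1 := by
          rw [abs_of_nonneg (visit_nonneg hp hold _ a0 s0 s)]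
          exact visit_le_one hp hold _ a0 s0 s
        have h2 : |∑ a : A, πold s a * f a s| ≤ ∑ a : A, |f a s| := by
          calc |∑ a : A, πold s a * f a s| ≤ ∑ a : A, |πold s a * f a s| :=
                Finset.abs_sum_le_sum_abs _ _
          _ ≤ ∑ a : A, |f a s| := by
              refine Finset.sum_le_sum fun a _ => ?_
              rw [abs_mul, abs_of_nonneg ((hold s).1 a)]
              exact mul_le_of_le_one_left (abs_nonneg _) (pmf_le_one (hold s) a)
        calc |visit p πold (t+1) a0 s0 s| * |∑ a : A, πold s a * f a s|
            ≤ 1 * (∑ a : A, |f a s|) :=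
              mul_le_mul h1 h2 (abs_nonneg _) zero_le_one
        _ = ∑ a : A, |f a s| := one_mul _

lemma tsum_telescope_geom (hγ0 : 0 ≤ γ) (hγ1 : γ < 1) (M : ℕ → ℝ) (C : ℝ)
    (hM : ∀ t, |M t| ≤ C) :
    ∑' t : ℕ, γ ^ t * (γ * M (t + 1) - M t) = - M 0 := by
  have h1 : Summable fun t => γ ^ t * M t := summable_geom_bound hγ0 hγ1 _ C hM
  have h2 : Summable fun t => γ ^ t * (γ * M (t + 1)) :=
    summable_geom_bound hγ0 hγ1 _ (γ * C) (fun t => by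
      rw [abs_mul, abs_of_nonneg hγ0]
      exact mul_le_mul_of_nonneg_left (hM (t+1)) hγ0)
  have h3 : ∀ t : ℕ, γ ^ t * (γ * M (t + 1) - M t)
      = γ ^ t * (γ * M (t + 1)) - γ ^ t * M t := fun t => by ring
  rw [tsum_congr h3, Summable.tsum_sub h2 h1]
  have h4 : ∑' t : ℕ, γ ^ t * (γ * M (t + 1)) = ∑' t : ℕ, γ ^ (t + 1) * M (t + 1) :=
    tsum_congr fun t => by rw [pow_succ]; ring
  have h5 : ∑' t : ℕ, γ ^ t * M t = M 0 + ∑' t : ℕ, γ ^ (t + 1) * M (t + 1) := by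
    simpa using Summable.tsum_eq_zero_add h1
  rw [h4, h5]; ring

lemma summable_MM_shift (hp : IsKernel p) (hold : IsPolicy πold)
    (hγ0 : 0 ≤ γ) (hγ1 : γ < 1) (f : A → S → ℝ) (a0 : A) (s0 : S) :
    Summable fun t : ℕ => γ ^ (t + 1) * MM p πold f a0 s0 (t + 1) :=
  summable_shift hγ0 hγ1 _ (∑ s : S, ∑ a : A, |f a s|)
    (fun t => MM_bound hp hold f a0 s0 (t + 1))

end Aux2
section Aux3

variable {S A : Type} [Fintype S] [Fintype A] [DecidableEq S] [DecidableEq A]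
variable {p : A → S → S → ℝ} {πold : S → A → ℝ} {γ : ℝ}

lemma qsum (hp : IsKernel p) (hold : IsPolicy πold) (hγ0 : 0 ≤ γ) (hγ1 : γ < 1)
    {pinf : A → S → ℝ} (hpos : ∀ a s, 0 < pinf a s) (g : A → S → ℝ) (a0 : A) (s0 : S) :
    ∑ a : A, ∑ s : S, pinf a s * ratio p γ pinf πold a s a0 s0 * g a s =
      (1 - γ) * (g a0 s0 + ∑' t : ℕ, γ ^ (t + 1) * MM p πold g a0 s0 (t + 1)) := by
  have hterm : ∀ a s, pinf a s * ratio p γ pinf πold a s a0 s0 * g a s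
      = (1 - γ) * ((if a = a0 ∧ s = s0 then (1:ℝ) else 0) * g a s)
        + ∑' t : ℕ, γ ^ (t+1) * ((1 - γ) * (πold s a * visit p πold (t+1) a0 s0 s * g a s)) := by
    intro a s
    have hne : pinf a s ≠ 0 := (hpos a s).ne'
    have e1 : ∀ t : ℕ, γ ^ (t+1) * ((1 - γ) * (πold s a * visit p πold (t+1) a0 s0 s * g a s))
        = (1 - γ) * (γ ^ (t+1) * (πold s a * visit p πold (t+1) a0 s0 s) * g a s) :=
      fun t => by ring
    rw [tsum_congr e1, tsum_mul_left, tsum_mul_right, ratio]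
    field_simp
    split_ifs <;> ring
  simp_rw [hterm]
  simp only [Finset.sum_add_distrib]
  have hsumm : ∀ (a : A) (s : S), Summable fun t : ℕ =>
      γ ^ (t+1) * ((1 - γ) * (πold s a * visit p πold (t+1) a0 s0 s * g a s)) := by
    intro a s
    apply summable_shift hγ0 hγ1 _ (|1 - γ| * (πold s a * |g a s|))
    intro t
    rw [abs_mul]
    refine mul_le_mul_of_nonneg_left ?_ (abs_nonneg _)
    rw [abs_mul, abs_mul, abs_of_nonneg ((hold s).1 a)]
    have hv : |visit p πold (t+1) a0 s0 s| ≤ 1 := by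
      rw [abs_of_nonneg (visit_nonneg hp hold _ a0 s0 s)]
      exact visit_le_one hp hold _ a0 s0 s
    exact mul_le_mul_of_nonneg_right
      (mul_le_of_le_one_right ((hold s).1 a) hv) (abs_nonneg _)
  have hA : (∑ a : A, ∑ s : S, (1 - γ) * ((if a = a0 ∧ s = s0 then (1:ℝ) else 0) * g a s))
      = (1 - γ) * g a0 s0 := by
    rw [Finset.sum_eq_single a0]
    · rw [Finset.sum_eq_single s0]
      · simp
      · intro s _ hs; simp [hs]
      · intro h; exact absurd (Finset.mem_univ s0) h
    · intro a _ ha; exact Finset.sum_eq_zero fun s _ => by simp [ha]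
    · intro h; exact absurd (Finset.mem_univ a0) h
  have hB : (∑ a : A, ∑ s : S, ∑' t : ℕ,
        γ ^ (t+1) * ((1 - γ) * (πold s a * visit p πold (t+1) a0 s0 s * g a s)))
      = ∑' t : ℕ, (1 - γ) * (γ ^ (t+1) * MM p πold g a0 s0 (t+1)) := by
    have step1 : ∀ a : A, (∑ s : S, ∑' t : ℕ,
          γ ^ (t+1) * ((1 - γ) * (πold s a * visit p πold (t+1) a0 s0 s * g a s)))
        = ∑' t : ℕ, ∑ s : S,
            γ ^ (t+1) * ((1 - γ) * (πold s a * visit p πold (t+1) a0 s0 s * g a s)) :=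
      fun a => (Summable.tsum_finsetSum fun s _ => hsumm a s).symm
    rw [Finset.sum_congr rfl fun a _ => step1 a,
      ← Summable.tsum_finsetSum fun a (_ : a ∈ Finset.univ) => summable_sum fun s _ => hsumm a s]
    refine tsum_congr fun t => ?_
    have hR : (1 - γ) * (γ ^ (t+1) * MM p πold g a0 s0 (t+1))
        = ∑ s : S, ∑ a : A,
            γ ^ (t+1) * ((1 - γ) * (πold s a * visit p πold (t+1) a0 s0 s * g a s)) := by
      rw [MM_succ]
      simp only [Finset.mul_sum]
      exact Finset.sum_congr rfl fun s _ => Finset.sum_congr rfl fun a _ => by ring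
    rw [hR, Finset.sum_comm]
  rw [hA, hB, tsum_mul_left]
  ring

end Aux3
section Aux4

variable {S A : Type} [Fintype S] [Fintype A] [DecidableEq S] [DecidableEq A]
variable {p : A → S → S → ℝ} {πold : S → A → ℝ} {γ : ℝ}

/-- Φ applied to the reward gives `(1-γ) Q^{πold}`. -/
lemma Phi_r (hp : IsKernel p) (hold : IsPolicy πold) (hγ0 : 0 ≤ γ) (hγ1 : γ < 1)
    {pinf : A → S → ℝ} (hpos : ∀ a s, 0 < pinf a s) (r : S → A → ℝ) (a0 : A) (s0 : S) :
    ∑ a : A, ∑ s : S, pinf a s * ratio p γ pinf πold a s a0 s0 * r s a =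
      (1 - γ) * Qfun p r γ πold a0 s0 := by
  rw [qsum hp hold hγ0 hγ1 hpos (fun a s => r s a) a0 s0, Qfun]
  rfl

/-- The `πold`-average of the advantage vanishes. -/
lemma sum_pold_adv (hold : IsPolicy πold) (r : S → A → ℝ) (s : S) :
    ∑ a : A, πold s a * Adv p r γ πold a s = 0 := by
  have h1 : ∀ a : A, πold s a * Adv p r γ πold a s
      = πold s a * Qfun p r γ πold a s - πold s a * Vfun p r γ πold s := fun a => by
    rw [Adv]; ring
  rw [Finset.sum_congr rfl fun a _ => h1 a, Finset.sum_sub_distrib, ← Finset.sum_mul,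
    (hold s).2, one_mul]
  show Vfun p r γ πold s - Vfun p r γ πold s = 0
  exact sub_self _

/-- Φ applied to the advantage gives `(1-γ) A^{πold}`. -/
lemma Phi_adv (hp : IsKernel p) (hold : IsPolicy πold) (hγ0 : 0 ≤ γ) (hγ1 : γ < 1)
    {pinf : A → S → ℝ} (hpos : ∀ a s, 0 < pinf a s) (r : S → A → ℝ) (a0 : A) (s0 : S) :
    ∑ a : A, ∑ s : S, pinf a s * ratio p γ pinf πold a s a0 s0 * Adv p r γ πold a s =
      (1 - γ) * Adv p r γ πold a0 s0 := by
  rw [qsum hp hold hγ0 hγ1 hpos (Adv p r γ πold) a0 s0]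
  have hz : ∀ t : ℕ, MM p πold (Adv p r γ πold) a0 s0 (t + 1) = 0 := by
    intro t
    rw [MM_succ]
    exact Finset.sum_eq_zero fun s _ => by rw [sum_pold_adv hold r s, mul_zero]
  simp [hz]

/-- Φ applied to a function of the state only. -/
lemma Phi_state (hp : IsKernel p) (hold : IsPolicy πold) (hγ0 : 0 ≤ γ) (hγ1 : γ < 1)
    {pinf : A → S → ℝ} (hpos : ∀ a s, 0 < pinf a s) (L : S → ℝ) (a0 : A) (s0 : S) :
    ∑ a : A, ∑ s : S, pinf a s * ratio p γ pinf πold a s a0 s0 * L s =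
      ∑ s : S, dvisit p γ πold s a0 s0 * L s := by
  rw [qsum hp hold hγ0 hγ1 hpos (fun _ s => L s) a0 s0]
  have hMM : ∀ t : ℕ, MM p πold (fun _ s => L s) a0 s0 (t + 1)
      = ∑ s : S, visit p πold (t+1) a0 s0 s * L s := by
    intro t
    rw [MM_succ]
    refine Finset.sum_congr rfl fun s _ => ?_
    rw [← Finset.sum_mul, (hold s).2, one_mul]
  -- rewrite the RHS
  have hsummand : ∀ s : S, Summable fun t : ℕ => γ ^ t * visit p πold t a0 s0 s * L s := by
    intro s
    have := summable_geom_bound hγ0 hγ1 (fun t => visit p πold t a0 s0 s * L s) (|L s|)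
      (fun t => by
        rw [abs_mul]
        refine mul_le_of_le_one_left (abs_nonneg _) ?_
        rw [abs_of_nonneg (visit_nonneg hp hold t a0 s0 s)]
        exact visit_le_one hp hold t a0 s0 s)
    exact this.congr fun t => by ring
  have hR : ∑ s : S, dvisit p γ πold s a0 s0 * L s
      = (1 - γ) * ∑' t : ℕ, γ ^ t * ∑ s : S, visit p πold t a0 s0 s * L s := by
    have e1 : ∀ s : S, dvisit p γ πold s a0 s0 * L s
        = (1 - γ) * ∑' t : ℕ, γ ^ t * visit p πold t a0 s0 s * L s := by
      intro s
      rw [dvisit, mul_assoc, ← tsum_mul_right]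
    rw [Finset.sum_congr rfl fun s _ => e1 s, ← Finset.mul_sum,
      ← Summable.tsum_finsetSum fun s (_ : s ∈ Finset.univ) => hsummand s]
    refine congrArg _ (tsum_congr fun t => ?_)
    rw [Finset.mul_sum]
    exact Finset.sum_congr rfl fun s _ => mul_assoc _ _ _
  rw [hR]
  have hsum2 : Summable fun t : ℕ => γ ^ t * ∑ s : S, visit p πold t a0 s0 s * L s := by
    refine summable_geom_bound hγ0 hγ1 _ (∑ s : S, |L s|) fun t => ?_
    calc |∑ s : S, visit p πold t a0 s0 s * L s| ≤ ∑ s : S, |visit p πold t a0 s0 s * L s| :=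
          Finset.abs_sum_le_sum_abs _ _
    _ ≤ ∑ s : S, |L s| := by
        refine Finset.sum_le_sum fun s _ => ?_
        rw [abs_mul]
        refine mul_le_of_le_one_left (abs_nonneg _) ?_
        rw [abs_of_nonneg (visit_nonneg hp hold t a0 s0 s)]
        exact visit_le_one hp hold t a0 s0 s
  rw [Summable.tsum_eq_zero_add hsum2]
  have h0 : (∑ s : S, visit p πold 0 a0 s0 s * L s) = L s0 := by
    simp [visit]
  simp only [pow_zero, one_mul, h0]
  congr 2
  exact tsum_congr fun t => by rw [hMM t]
end Aux4
section Aux5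

variable {S A : Type} [Fintype S] [Fintype A] [DecidableEq S] [DecidableEq A]
variable {p : A → S → S → ℝ} {πold : S → A → ℝ} {γ : ℝ}

lemma Phi_tel (hp : IsKernel p) (hold : IsPolicy πold) (hγ0 : 0 ≤ γ) (hγ1 : γ < 1)
    {pinf : A → S → ℝ} (hpos : ∀ a s, 0 < pinf a s) (f : A → S → ℝ) (a0 : A) (s0 : S) :
    ∑ a : A, ∑ s : S, pinf a s * ratio p γ pinf πold a s a0 s0 *
        (γ * (∑ s' : S, p a s s' * ∑ a' : A, πold s' a' * f a' s') - f a s)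
      = -((1 - γ) * f a0 s0) := by
  set g : A → S → ℝ :=
    fun a s => γ * (∑ s' : S, p a s s' * ∑ a' : A, πold s' a' * f a' s') - f a s with hg
  rw [qsum hp hold hγ0 hγ1 hpos g a0 s0]
  set N : ℕ → ℝ := MM p πold f a0 s0 with hN
  have hrec : ∀ t : ℕ, N (t + 1 + 1)
      = ∑ s : S, visit p πold (t + 1) a0 s0 s * ∑ a : A, πold s a *
          (∑ s' : S, p a s s' * ∑ a' : A, πold s' a' * f a' s') := by
    intro t
    have lhs_eq : N (t + 1 + 1) = ∑ s' : S, (∑ s : S, visit p πold (t + 1) a0 s0 s *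
        ∑ a : A, πold s a * p a s s') * ∑ a' : A, πold s' a' * f a' s' := rfl
    rw [lhs_eq]
    have e1 : ∀ s' : S, (∑ s : S, visit p πold (t+1) a0 s0 s * ∑ a : A, πold s a * p a s s')
          * (∑ a' : A, πold s' a' * f a' s')
        = ∑ s : S, ∑ a : A, visit p πold (t+1) a0 s0 s * (πold s a * p a s s')
            * (∑ a' : A, πold s' a' * f a' s') := by
      intro s'
      rw [Finset.sum_mul]
      refine Finset.sum_congr rfl fun s _ => ?_
      have e2 : visit p πold (t+1) a0 s0 s * (∑ a : A, πold s a * p a s s')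
          = ∑ a : A, visit p πold (t+1) a0 s0 s * (πold s a * p a s s') := by
        rw [Finset.mul_sum]
      rw [e2, Finset.sum_mul]
    rw [Finset.sum_congr rfl fun s' _ => e1 s', Finset.sum_comm]
    refine Finset.sum_congr rfl fun s _ => ?_
    rw [Finset.sum_comm, Finset.mul_sum]
    refine Finset.sum_congr rfl fun a _ => ?_
    rw [Finset.mul_sum, Finset.mul_sum]
    exact Finset.sum_congr rfl fun s' _ => by ring
  have hMg : ∀ t : ℕ, MM p πold g a0 s0 (t + 1) = γ * N (t + 1 + 1) - N (t + 1) := by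
    intro t
    rw [MM_succ, hrec t, hN, MM_succ]
    rw [Finset.mul_sum, ← Finset.sum_sub_distrib]
    refine Finset.sum_congr rfl fun s _ => ?_
    have h1 : visit p πold (t+1) a0 s0 s * (∑ a : A, πold s a * g a s)
        = ∑ a : A, visit p πold (t+1) a0 s0 s * (πold s a * g a s) := by
      rw [Finset.mul_sum]
    have h2 : visit p πold (t+1) a0 s0 s *
          (∑ a : A, πold s a * (∑ s' : S, p a s s' * ∑ a' : A, πold s' a' * f a' s'))
        = ∑ a : A, visit p πold (t+1) a0 s0 s *
            (πold s a * (∑ s' : S, p a s s' * ∑ a' : A, πold s' a' * f a' s')) := by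
      rw [Finset.mul_sum]
    have h3 : visit p πold (t+1) a0 s0 s * (∑ a : A, πold s a * f a s)
        = ∑ a : A, visit p πold (t+1) a0 s0 s * (πold s a * f a s) := by
      rw [Finset.mul_sum]
    rw [h1, h2, h3, Finset.mul_sum, ← Finset.sum_sub_distrib]
    refine Finset.sum_congr rfl fun a _ => ?_
    simp only [hg]
    ring
  have hg0 : g a0 s0 = γ * N (0 + 1) - N 0 := rfl
  have hNbd : ∀ t, |N t| ≤ ∑ s : S, ∑ a : A, |f a s| := fun t => MM_bound hp hold f a0 s0 t
  have hsum : Summable fun t : ℕ => γ ^ t * (γ * N (t + 1) - N t) := by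
    refine summable_geom_bound hγ0 hγ1 _
      ((γ + 1) * ∑ s : S, ∑ a : A, |f a s|) fun t => ?_
    calc |γ * N (t + 1) - N t| ≤ |γ * N (t + 1)| + |N t| := by
          rw [sub_eq_add_neg]
          exact (abs_add_le _ _).trans (by rw [abs_neg])
    _ ≤ γ * (∑ s : S, ∑ a : A, |f a s|) + ∑ s : S, ∑ a : A, |f a s| := by
        refine add_le_add ?_ (hNbd t)
        rw [abs_mul, abs_of_nonneg hγ0]
        exact mul_le_mul_of_nonneg_left (hNbd (t + 1)) hγ0
    _ = (γ + 1) * ∑ s : S, ∑ a : A, |f a s| := by ring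
  have htel : ∑' t : ℕ, γ ^ t * (γ * N (t + 1) - N t) = - N 0 :=
    tsum_telescope_geom hγ0 hγ1 N _ hNbd
  have hshift := Summable.tsum_eq_zero_add hsum
  rw [htel] at hshift
  rw [show (∑' t : ℕ, γ ^ (t + 1) * MM p πold g a0 s0 (t + 1))
      = ∑' t : ℕ, γ ^ (t + 1) * (γ * N (t + 1 + 1) - N (t + 1)) from
    tsum_congr fun t => by rw [hMg t], hg0]
  have hfin : γ * N (0 + 1) - N 0 + ∑' t : ℕ, γ ^ (t + 1) * (γ * N (t + 1 + 1) - N (t + 1))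
      = - N 0 := by
    rw [hshift]
    norm_num
  rw [hfin]
  have hN0 : N 0 = f a0 s0 := rfl
  rw [hN0]; ring

lemma Phi_telV (hp : IsKernel p) (hold : IsPolicy πold) (hγ0 : 0 ≤ γ) (hγ1 : γ < 1)
    {pinf : A → S → ℝ} (hpos : ∀ a s, 0 < pinf a s) (h : S → ℝ) (a0 : A) (s0 : S) :
    ∑ a : A, ∑ s : S, pinf a s * ratio p γ pinf πold a s a0 s0 *
        (γ * (∑ s' : S, p a s s' * h s') - h s)
      = -((1 - γ) * h s0) := by
  have := Phi_tel hp hold hγ0 hγ1 hpos (fun _ s => h s) a0 s0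
  rw [← this]
  refine Finset.sum_congr rfl fun a _ => Finset.sum_congr rfl fun s _ => ?_
  have e : (∑ s' : S, p a s s' * ∑ a' : A, πold s' a' * h s') = ∑ s' : S, p a s s' * h s' :=
    Finset.sum_congr rfl fun s' _ => by rw [← Finset.sum_mul, (hold s').2, one_mul]
  rw [e]

end Aux5
section Aux6

variable {S A : Type} [Fintype S] [Fintype A] [DecidableEq S] [DecidableEq A]

/-- `L(s) = Σ_a π(a|s) A^{πold}(a,s)`. -/
noncomputable def Lfun (p : A → S → S → ℝ) (r : S → A → ℝ) (γ : ℝ)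
    (π πold : S → A → ℝ) (s : S) : ℝ :=
  ∑ a : A, π s a * Adv p r γ πold a s

/-- `F(a,s) = Σ_{s*} d̃(s*|a,s) L(s*)`. -/
noncomputable def Ffun (p : A → S → S → ℝ) (r : S → A → ℝ) (γ : ℝ)
    (π πold : S → A → ℝ) (dt : S → A → S → ℝ) (a : A) (s : S) : ℝ :=
  ∑ sstar : S, dt sstar a s * Lfun p r γ π πold sstar

variable {p : A → S → S → ℝ} {πold : S → A → ℝ} {γ : ℝ}

lemma part2_inner (hp : IsKernel p) (hold : IsPolicy πold) (hγ0 : 0 ≤ γ) (hγ1 : γ < 1)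
    {pinf : A → S → ℝ} (hpos : ∀ a s, 0 < pinf a s) (r : S → A → ℝ) (Vt : S → ℝ)
    (astar : A) (sstar : S) :
    ∑ a : A, ∑ s : S, pinf a s * ratio p γ pinf πold a s astar sstar *
        (r s a + γ * (∑ s' : S, p a s s' * Vt s') - Vt s - Adv p r γ πold a s)
      = (1 - γ) * (Vfun p r γ πold sstar - Vt sstar) := by
  have hsplit : ∀ a s, pinf a s * ratio p γ pinf πold a s astar sstar *
        (r s a + γ * (∑ s' : S, p a s s' * Vt s') - Vt s - Adv p r γ πold a s)
      = pinf a s * ratio p γ pinf πold a s astar sstar * r s a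
        + pinf a s * ratio p γ pinf πold a s astar sstar *
            (γ * (∑ s' : S, p a s s' * Vt s') - Vt s)
        - pinf a s * ratio p γ pinf πold a s astar sstar * Adv p r γ πold a s :=
    fun a s => by ring
  rw [Finset.sum_congr rfl fun a _ => Finset.sum_congr rfl fun s _ => hsplit a s]
  simp only [Finset.sum_sub_distrib, Finset.sum_add_distrib]
  rw [Phi_r hp hold hγ0 hγ1 hpos r astar sstar, Phi_telV hp hold hγ0 hγ1 hpos Vt astar sstar,
    Phi_adv hp hold hγ0 hγ1 hpos r astar sstar, Adv]
  ring

lemma part3_inner (hp : IsKernel p) (hold : IsPolicy πold) (hγ0 : 0 ≤ γ) (hγ1 : γ < 1)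
    {pinf : A → S → ℝ} (hpos : ∀ a s, 0 < pinf a s) (r : S → A → ℝ) (π : S → A → ℝ)
    (dt : S → A → S → ℝ) (a0 : A) (s0 : S) :
    ∑ a : A, ∑ s : S, pinf a s * ratio p γ pinf πold a s a0 s0 *
        (γ * (∑ s' : S, p a s s' * ∑ a' : A, πold s' a' * Ffun p r γ π πold dt a' s')
          - Ffun p r γ π πold dt a s + (1 - γ) * Lfun p r γ π πold s)
      = -((1 - γ) * Ffun p r γ π πold dt a0 s0)
        + ∑ s : S, dvisit p γ πold s a0 s0 * ((1 - γ) * Lfun p r γ π πold s) := by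
  have hsplit : ∀ a s, pinf a s * ratio p γ pinf πold a s a0 s0 *
        (γ * (∑ s' : S, p a s s' * ∑ a' : A, πold s' a' * Ffun p r γ π πold dt a' s')
          - Ffun p r γ π πold dt a s + (1 - γ) * Lfun p r γ π πold s)
      = pinf a s * ratio p γ pinf πold a s a0 s0 *
          (γ * (∑ s' : S, p a s s' * ∑ a' : A, πold s' a' * Ffun p r γ π πold dt a' s')
            - Ffun p r γ π πold dt a s)
        + pinf a s * ratio p γ pinf πold a s a0 s0 * ((1 - γ) * Lfun p r γ π πold s) :=
    fun a s => by ring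
  rw [Finset.sum_congr rfl fun a _ => Finset.sum_congr rfl fun s _ => hsplit a s]
  simp only [Finset.sum_add_distrib]
  rw [Phi_tel hp hold hγ0 hγ1 hpos (Ffun p r γ π πold dt) a0 s0,
    Phi_state hp hold hγ0 hγ1 hpos (fun s => (1 - γ) * Lfun p r γ π πold s) a0 s0]

lemma sum_exchange_SA (f : A → S → ℝ) (c : S → ℝ) (h : S → A → ℝ)
    (w : A → S → A → S → ℝ) :
    ∑ a : A, ∑ s : S, f a s * (∑ sstar : S, c sstar * ∑ astar : A,
        h sstar astar * w a s astar sstar)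
      = ∑ sstar : S, c sstar * ∑ astar : A, h sstar astar *
          (∑ a : A, ∑ s : S, f a s * w a s astar sstar) := by
  simp only [Finset.mul_sum]
  rw [Finset.sum_congr rfl fun a (_ : a ∈ Finset.univ) => Finset.sum_comm, Finset.sum_comm]
  refine Finset.sum_congr rfl fun sstar _ => ?_
  rw [Finset.sum_congr rfl fun a (_ : a ∈ Finset.univ) => Finset.sum_comm, Finset.sum_comm]
  exact Finset.sum_congr rfl fun astar _ => Finset.sum_congr rfl fun a _ =>
    Finset.sum_congr rfl fun s _ => by ring

lemma sum_exchange_AS (f : A → S → ℝ) (h : A → S → ℝ) (w : A → S → A → S → ℝ) :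
    ∑ a : A, ∑ s : S, f a s * (∑ a0 : A, ∑ s0 : S, h a0 s0 * w a s a0 s0)
      = ∑ a0 : A, ∑ s0 : S, h a0 s0 * (∑ a : A, ∑ s : S, f a s * w a s a0 s0) := by
  simp only [Finset.mul_sum]
  rw [Finset.sum_congr rfl fun a (_ : a ∈ Finset.univ) => Finset.sum_comm, Finset.sum_comm]
  refine Finset.sum_congr rfl fun a0 _ => ?_
  rw [Finset.sum_congr rfl fun a (_ : a ∈ Finset.univ) => Finset.sum_comm, Finset.sum_comm]
  exact Finset.sum_congr rfl fun s0 _ => Finset.sum_congr rfl fun a _ =>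
    Finset.sum_congr rfl fun s _ => by ring

lemma Fswap (w : S → ℝ) (π : S → A → ℝ) (At : A → S → ℝ) :
    ∑ astar : A, ∑ sstar : S, w sstar * π sstar astar * At astar sstar
      = ∑ sstar : S, w sstar * ∑ astar : A, π sstar astar * At astar sstar := by
  rw [Finset.sum_comm]
  refine Finset.sum_congr rfl fun sstar _ => ?_
  rw [Finset.mul_sum]
  exact Finset.sum_congr rfl fun a _ => by ring

end Aux6

section Aux6b
variable {S A : Type} [Fintype S] [Fintype A] [DecidableEq S] [DecidableEq A]

lemma sum_comm4 (g : A → S → S → A → ℝ) :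
    ∑ a0 : A, ∑ s0 : S, ∑ s : S, ∑ a : A, g a0 s0 s a
      = ∑ a : A, ∑ s : S, ∑ s0 : S, ∑ a0 : A, g a0 s0 s a := by
  calc ∑ a0 : A, ∑ s0 : S, ∑ s : S, ∑ a : A, g a0 s0 s a
      = ∑ a0 : A, ∑ s0 : S, ∑ a : A, ∑ s : S, g a0 s0 s a :=
        Finset.sum_congr rfl fun a0 _ => Finset.sum_congr rfl fun s0 _ => Finset.sum_comm
    _ = ∑ a0 : A, ∑ a : A, ∑ s0 : S, ∑ s : S, g a0 s0 s a :=
        Finset.sum_congr rfl fun a0 _ => Finset.sum_comm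
    _ = ∑ a : A, ∑ a0 : A, ∑ s0 : S, ∑ s : S, g a0 s0 s a := Finset.sum_comm
    _ = ∑ a : A, ∑ a0 : A, ∑ s : S, ∑ s0 : S, g a0 s0 s a :=
        Finset.sum_congr rfl fun a _ => Finset.sum_congr rfl fun a0 _ => Finset.sum_comm
    _ = ∑ a : A, ∑ s : S, ∑ a0 : A, ∑ s0 : S, g a0 s0 s a :=
        Finset.sum_congr rfl fun a _ => Finset.sum_comm
    _ = ∑ a : A, ∑ s : S, ∑ s0 : S, ∑ a0 : A, g a0 s0 s a :=
        Finset.sum_congr rfl fun a _ => Finset.sum_congr rfl fun s _ => Finset.sum_comm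

lemma sum_comm3 (g : A → S → S → ℝ) :
    ∑ a0 : A, ∑ s0 : S, ∑ sstar : S, g a0 s0 sstar
      = ∑ sstar : S, ∑ a0 : A, ∑ s0 : S, g a0 s0 sstar := by
  calc ∑ a0 : A, ∑ s0 : S, ∑ sstar : S, g a0 s0 sstar
      = ∑ a0 : A, ∑ sstar : S, ∑ s0 : S, g a0 s0 sstar :=
        Finset.sum_congr rfl fun a0 _ => Finset.sum_comm
    _ = ∑ sstar : S, ∑ a0 : A, ∑ s0 : S, g a0 s0 sstar := Finset.sum_comm

end Aux6b
theorem estimating_function_unbiased_B3 {S A : Type} [Fintype S] [Fintype A] [DecidableEq S] [DecidableEq A]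
    [Nonempty S] [Nonempty A]
    (p : A → S → S → ℝ) (r : S → A → ℝ) (γ : ℝ) (ν : S → ℝ) (pinf : A → S → ℝ) (Rmax : ℝ)
    (hp : IsKernel p) (hr : ∀ s a, |r s a| ≤ Rmax)
    (hγ0 : 0 ≤ γ) (hγ1 : γ < 1) (hν : IsPMF ν)
    (hpinf : IsPMF (fun as : A × S => pinf as.1 as.2)) (hpos : ∀ a s, 0 < pinf a s)
    (π πold : S → A → ℝ) (hπ : IsPolicy π) (hold : IsPolicy πold)
    (Vt : S → ℝ) (dt : S → A → S → ℝ)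
    (hdt : ∀ a s, IsPMF (fun sstar => dt sstar a s)) :
    Epsi p r γ ν pinf π πold Vt (Adv p r γ πold) (ratio p γ pinf πold) dt =
      eta1 p r γ ν π πold := by
  classical
  have hγne : (1 : ℝ) - γ ≠ 0 := by linarith
  -- abbreviations (all definitional)
  set L := Lfun p r γ π πold with hL
  set F := Ffun p r γ π πold dt with hF
  set ω := ratio p γ pinf πold with hω
  -- the ψ₁ constant
  set C1 : ℝ := ∑ sstar : S,
    (∑ a0 : A, ∑ s0 : S, πold s0 a0 * ν s0 * dt sstar a0 s0) * L sstar with hC1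
  -- step 1: rewrite ψ pointwise
  have hbracket : ∀ (a : A) (s : S) (s' : S),
      (∑ astar : A,
        (γ * ∑ a' : A, πold s' a' * ∑ sstar : S,
              dt sstar a' s' * π sstar astar * Adv p r γ πold astar sstar
          - ∑ sstar : S, dt sstar a s * π sstar astar * Adv p r γ πold astar sstar
          + (1 - γ) * π s astar * Adv p r γ πold astar s))
      = γ * (∑ a' : A, πold s' a' * F a' s') - F a s + (1 - γ) * L s := by
    intro a s s'
    simp only [Finset.sum_add_distrib, Finset.sum_sub_distrib]
    congr 1
    · congr 1
      · rw [← Finset.mul_sum]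
        congr 1
        rw [Finset.sum_comm]
        refine Finset.sum_congr rfl fun a' _ => ?_
        rw [← Finset.mul_sum]
        congr 1
        rw [hF]
        simp only [Ffun, Lfun]
        exact Fswap _ _ _
      · rw [hF]
        simp only [Ffun, Lfun]
        exact Fswap _ _ _
    · rw [hL]
      simp only [Lfun]
      rw [Finset.mul_sum]
      exact Finset.sum_congr rfl fun a0 _ => by ring
  have hpsi : ∀ (a : A) (s : S) (rr : ℝ) (s' : S),
      psi γ ν π πold Vt (Adv p r γ πold) ω dt s a rr s'
        = C1
          + (1 / (1 - γ)) * (∑ sstar : S,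
              (∑ a0 : A, ∑ s0 : S, πold s0 a0 * ν s0 * dt sstar a0 s0) *
              ∑ astar : A, (π sstar astar - πold sstar astar) * ω a s astar sstar)
            * (rr + γ * Vt s' - Vt s - Adv p r γ πold a s)
          + ((∑ a0 : A, ∑ s0 : S, πold s0 a0 * ν s0 * ω a s a0 s0) / (1 - γ)) *
              (γ * (∑ a' : A, πold s' a' * F a' s') - F a s + (1 - γ) * L s) := by
    intro a s rr s'
    have h2 : (∑ sstar : S, (∑ a0 : A, ∑ s0 : S, πold s0 a0 * ν s0 * dt sstar a0 s0) *
          ∑ astar : A, (π sstar astar - πold sstar astar) * ω a s astar sstar *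
            (rr + γ * Vt s' - Vt s - Adv p r γ πold a s))
        = (∑ sstar : S, (∑ a0 : A, ∑ s0 : S, πold s0 a0 * ν s0 * dt sstar a0 s0) *
            ∑ astar : A, (π sstar astar - πold sstar astar) * ω a s astar sstar)
          * (rr + γ * Vt s' - Vt s - Adv p r γ πold a s) := by
      rw [Finset.sum_mul]
      refine Finset.sum_congr rfl fun sstar _ => ?_
      have hin : (∑ astar : A, (π sstar astar - πold sstar astar) * ω a s astar sstar) *
            (rr + γ * Vt s' - Vt s - Adv p r γ πold a s)
          = ∑ astar : A, (π sstar astar - πold sstar astar) * ω a s astar sstar *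
              (rr + γ * Vt s' - Vt s - Adv p r γ πold a s) := by
        rw [Finset.sum_mul]
      rw [mul_assoc, hin]
    have hX1 : (∑ sstar : S, (∑ a0 : A, ∑ s0 : S, πold s0 a0 * ν s0 * dt sstar a0 s0) *
          ∑ astar : A, π sstar astar * Adv p r γ πold astar sstar) = C1 := by
      rw [hC1, hL]
      simp only [Lfun]
    simp only [psi]
    rw [hbracket a s s', h2, hX1]
    ring
  -- step 2: integrate out s'
  have hout : ∀ (a : A) (s : S),
      (∑ s' : S, p a s s' * psi γ ν π πold Vt (Adv p r γ πold) ω dt s a (r s a) s')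
        = C1
          + (1 / (1 - γ)) * (∑ sstar : S,
              (∑ a0 : A, ∑ s0 : S, πold s0 a0 * ν s0 * dt sstar a0 s0) *
              ∑ astar : A, (π sstar astar - πold sstar astar) * ω a s astar sstar)
            * (r s a + γ * (∑ s' : S, p a s s' * Vt s') - Vt s - Adv p r γ πold a s)
          + ((∑ a0 : A, ∑ s0 : S, πold s0 a0 * ν s0 * ω a s a0 s0) / (1 - γ)) *
              (γ * (∑ s' : S, p a s s' * ∑ a' : A, πold s' a' * F a' s')
                - F a s + (1 - γ) * L s) := by
    intro a s
    have hexp : ∀ s' : S, p a s s' * psi γ ν π πold Vt (Adv p r γ πold) ω dt s a (r s a) s'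
        = (C1
            + (1 / (1 - γ)) * (∑ sstar : S,
                (∑ a0 : A, ∑ s0 : S, πold s0 a0 * ν s0 * dt sstar a0 s0) *
                ∑ astar : A, (π sstar astar - πold sstar astar) * ω a s astar sstar)
              * (r s a - Vt s - Adv p r γ πold a s)
            + ((∑ a0 : A, ∑ s0 : S, πold s0 a0 * ν s0 * ω a s a0 s0) / (1 - γ)) *
                (- F a s + (1 - γ) * L s)) * p a s s'
          + ((1 / (1 - γ)) * (∑ sstar : S,
                (∑ a0 : A, ∑ s0 : S, πold s0 a0 * ν s0 * dt sstar a0 s0) *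
                ∑ astar : A, (π sstar astar - πold sstar astar) * ω a s astar sstar) * γ)
              * (p a s s' * Vt s')
          + ((∑ a0 : A, ∑ s0 : S, πold s0 a0 * ν s0 * ω a s a0 s0) / (1 - γ) * γ)
              * (p a s s' * ∑ a' : A, πold s' a' * F a' s') := by
      intro s'
      rw [hpsi a s (r s a) s']
      ring
    rw [Finset.sum_congr rfl fun s' _ => hexp s']
    simp only [Finset.sum_add_distrib]
    simp only [← Finset.mul_sum]
    rw [(hp a s).2]
    ring
  -- step 3: assemble
  rw [Epsi]
  rw [Finset.sum_congr rfl fun a _ => Finset.sum_congr rfl fun s _ =>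
    congrArg (fun x => pinf a s * x) (hout a s)]
  have hsplit2 : ∀ (a : A) (s : S), pinf a s *
      (C1
        + (1 / (1 - γ)) * (∑ sstar : S,
            (∑ a0 : A, ∑ s0 : S, πold s0 a0 * ν s0 * dt sstar a0 s0) *
            ∑ astar : A, (π sstar astar - πold sstar astar) * ω a s astar sstar)
          * (r s a + γ * (∑ s' : S, p a s s' * Vt s') - Vt s - Adv p r γ πold a s)
        + ((∑ a0 : A, ∑ s0 : S, πold s0 a0 * ν s0 * ω a s a0 s0) / (1 - γ)) *
            (γ * (∑ s' : S, p a s s' * ∑ a' : A, πold s' a' * F a' s')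
              - F a s + (1 - γ) * L s))
    = pinf a s * C1
      + (1 / (1 - γ)) * ((pinf a s *
          (r s a + γ * (∑ s' : S, p a s s' * Vt s') - Vt s - Adv p r γ πold a s)) *
          (∑ sstar : S,
            (∑ a0 : A, ∑ s0 : S, πold s0 a0 * ν s0 * dt sstar a0 s0) *
            ∑ astar : A, (π sstar astar - πold sstar astar) * ω a s astar sstar))
      + (1 / (1 - γ)) * ((pinf a s *
          (γ * (∑ s' : S, p a s s' * ∑ a' : A, πold s' a' * F a' s')
            - F a s + (1 - γ) * L s)) *
          (∑ a0 : A, ∑ s0 : S, πold s0 a0 * ν s0 * ω a s a0 s0)) := by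
    intro a s
    field_simp
  rw [Finset.sum_congr rfl fun a _ => Finset.sum_congr rfl fun s _ => hsplit2 a s]
  simp only [Finset.sum_add_distrib]
  -- notations for the three pieces
  have hp1 : (∑ a : A, ∑ s : S, pinf a s) = 1 := by
    have h := hpinf.2
    rwa [Fintype.sum_prod_type] at h
  have hT1 : (∑ a : A, ∑ s : S, pinf a s * C1) = C1 := by
    have e : (∑ a : A, ∑ s : S, pinf a s * C1) = (∑ a : A, ∑ s : S, pinf a s) * C1 := by
      rw [Finset.sum_mul]
      exact Finset.sum_congr rfl fun a _ => by rw [Finset.sum_mul]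
    rw [e, hp1, one_mul]
  -- part 2 vanishes
  have hT2 : (∑ a : A, ∑ s : S, 1 / (1 - γ) *
      (pinf a s * (r s a + γ * ∑ s' : S, p a s s' * Vt s' - Vt s - Adv p r γ πold a s) *
        ∑ sstar : S, (∑ a0 : A, ∑ s0 : S, πold s0 a0 * ν s0 * dt sstar a0 s0) *
          ∑ astar : A, (π sstar astar - πold sstar astar) * ω a s astar sstar)) = 0 := by
    have inner : ∀ (sstar : S) (astar : A),
        (∑ a : A, ∑ s : S,
          pinf a s * (r s a + γ * ∑ s' : S, p a s s' * Vt s' - Vt s - Adv p r γ πold a s) *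
            ω a s astar sstar)
        = (1 - γ) * (Vfun p r γ πold sstar - Vt sstar) := by
      intro sstar astar
      rw [hω]
      rw [show (∑ a : A, ∑ s : S,
            pinf a s * (r s a + γ * ∑ s' : S, p a s s' * Vt s' - Vt s - Adv p r γ πold a s) *
              ratio p γ pinf πold a s astar sstar)
          = ∑ a : A, ∑ s : S, pinf a s * ratio p γ pinf πold a s astar sstar *
              (r s a + γ * (∑ s' : S, p a s s' * Vt s') - Vt s - Adv p r γ πold a s) from
        Finset.sum_congr rfl fun a _ => Finset.sum_congr rfl fun s _ => by ring]
      exact part2_inner hp hold hγ0 hγ1 hpos r Vt astar sstar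
    calc (∑ a : A, ∑ s : S, 1 / (1 - γ) *
        (pinf a s * (r s a + γ * ∑ s' : S, p a s s' * Vt s' - Vt s - Adv p r γ πold a s) *
          ∑ sstar : S, (∑ a0 : A, ∑ s0 : S, πold s0 a0 * ν s0 * dt sstar a0 s0) *
            ∑ astar : A, (π sstar astar - πold sstar astar) * ω a s astar sstar))
        = 1 / (1 - γ) * ∑ a : A, ∑ s : S,
            (pinf a s * (r s a + γ * ∑ s' : S, p a s s' * Vt s' - Vt s - Adv p r γ πold a s)) *
            (∑ sstar : S, (∑ a0 : A, ∑ s0 : S, πold s0 a0 * ν s0 * dt sstar a0 s0) *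
              ∑ astar : A, (π sstar astar - πold sstar astar) * ω a s astar sstar) := by
          rw [Finset.mul_sum]
          refine Finset.sum_congr rfl fun a _ => ?_
          rw [Finset.mul_sum]
      _ = 1 / (1 - γ) * ∑ sstar : S,
            (∑ a0 : A, ∑ s0 : S, πold s0 a0 * ν s0 * dt sstar a0 s0) *
            ∑ astar : A, (π sstar astar - πold sstar astar) *
              (∑ a : A, ∑ s : S,
                pinf a s * (r s a + γ * ∑ s' : S, p a s s' * Vt s' - Vt s - Adv p r γ πold a s) *
                  ω a s astar sstar) := by
          exact congrArg _ (sum_exchange_SA _ _ _ _)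
      _ = 0 := by
          have z : ∀ sstar : S, (∑ astar : A, (π sstar astar - πold sstar astar) *
              (∑ a : A, ∑ s : S,
                pinf a s * (r s a + γ * ∑ s' : S, p a s s' * Vt s' - Vt s - Adv p r γ πold a s) *
                  ω a s astar sstar)) = 0 := by
            intro sstar
            calc (∑ astar : A, (π sstar astar - πold sstar astar) *
                (∑ a : A, ∑ s : S,
                  pinf a s * (r s a + γ * ∑ s' : S, p a s s' * Vt s' - Vt s - Adv p r γ πold a s) *
                    ω a s astar sstar))
                = ∑ astar : A, (π sstar astar - πold sstar astar) *
                    ((1 - γ) * (Vfun p r γ πold sstar - Vt sstar)) :=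
                  Finset.sum_congr rfl fun astar _ => by rw [inner sstar astar]
              _ = (∑ astar : A, (π sstar astar - πold sstar astar)) *
                    ((1 - γ) * (Vfun p r γ πold sstar - Vt sstar)) := by rw [Finset.sum_mul]
              _ = 0 := by
                  rw [Finset.sum_sub_distrib, (hπ sstar).2, (hold sstar).2, sub_self, zero_mul]
          have z2 : (∑ sstar : S, (∑ a0 : A, ∑ s0 : S, πold s0 a0 * ν s0 * dt sstar a0 s0) *
              ∑ astar : A, (π sstar astar - πold sstar astar) *
                (∑ a : A, ∑ s : S,
                  pinf a s * (r s a + γ * ∑ s' : S, p a s s' * Vt s' - Vt s - Adv p r γ πold a s) *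
                    ω a s astar sstar)) = 0 :=
            Finset.sum_eq_zero fun sstar _ => by rw [z sstar, mul_zero]
          rw [z2, mul_zero]
  -- the two ψ₃ summary identities
  have hC1eq : (∑ a0 : A, ∑ s0 : S, πold s0 a0 * ν s0 * F a0 s0) = C1 := by
    rw [hF, hC1, hL]
    simp only [Ffun]
    calc (∑ a0 : A, ∑ s0 : S, πold s0 a0 * ν s0 *
          ∑ sstar : S, dt sstar a0 s0 * Lfun p r γ π πold sstar)
        = ∑ a0 : A, ∑ s0 : S, ∑ sstar : S,
            πold s0 a0 * ν s0 * dt sstar a0 s0 * Lfun p r γ π πold sstar := by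
          refine Finset.sum_congr rfl fun a0 _ => Finset.sum_congr rfl fun s0 _ => ?_
          rw [Finset.mul_sum]
          exact Finset.sum_congr rfl fun sstar _ => by ring
      _ = ∑ sstar : S, ∑ a0 : A, ∑ s0 : S,
            πold s0 a0 * ν s0 * dt sstar a0 s0 * Lfun p r γ π πold sstar := sum_comm3 _
      _ = ∑ sstar : S, (∑ a0 : A, ∑ s0 : S, πold s0 a0 * ν s0 * dt sstar a0 s0) *
            Lfun p r γ π πold sstar := by
          refine Finset.sum_congr rfl fun sstar _ => ?_
          rw [Finset.sum_mul]
          exact Finset.sum_congr rfl fun a0 _ => by rw [Finset.sum_mul]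
  have heta : (∑ a0 : A, ∑ s0 : S, πold s0 a0 * ν s0 *
      ∑ s : S, dvisit p γ πold s a0 s0 * L s) = eta1 p r γ ν π πold := by
    rw [hL]
    calc (∑ a0 : A, ∑ s0 : S, πold s0 a0 * ν s0 *
          ∑ s : S, dvisit p γ πold s a0 s0 * Lfun p r γ π πold s)
        = ∑ a0 : A, ∑ s0 : S, ∑ s : S, ∑ a : A,
            πold s0 a0 * ν s0 * (dvisit p γ πold s a0 s0 * (π s a * Adv p r γ πold a s)) := by
          refine Finset.sum_congr rfl fun a0 _ => Finset.sum_congr rfl fun s0 _ => ?_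
          rw [Finset.mul_sum]
          refine Finset.sum_congr rfl fun s _ => ?_
          simp only [Lfun]
          rw [Finset.mul_sum, Finset.mul_sum]
      _ = ∑ a : A, ∑ s : S, ∑ s0 : S, ∑ a0 : A,
            πold s0 a0 * ν s0 * (dvisit p γ πold s a0 s0 * (π s a * Adv p r γ πold a s)) :=
          sum_comm4 _
      _ = eta1 p r γ ν π πold := by
          rw [eta1]
          refine Finset.sum_congr rfl fun a _ => Finset.sum_congr rfl fun s _ => ?_
          rw [dnu, Finset.mul_sum]
          refine Finset.sum_congr rfl fun s0 _ => ?_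
          rw [Finset.mul_sum]
          exact Finset.sum_congr rfl fun a0 _ => by ring
  -- part 3
  have hT3 : (∑ a : A, ∑ s : S, 1 / (1 - γ) *
      (pinf a s * (γ * ∑ s' : S, p a s s' * ∑ a' : A, πold s' a' * F a' s'
          - F a s + (1 - γ) * L s) *
        ∑ a0 : A, ∑ s0 : S, πold s0 a0 * ν s0 * ω a s a0 s0))
      = -C1 + eta1 p r γ ν π πold := by
    have inner3 : ∀ (a0 : A) (s0 : S),
        (∑ a : A, ∑ s : S,
          pinf a s * (γ * ∑ s' : S, p a s s' * ∑ a' : A, πold s' a' * F a' s'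
              - F a s + (1 - γ) * L s) * ω a s a0 s0)
        = -((1 - γ) * F a0 s0)
          + ∑ s : S, dvisit p γ πold s a0 s0 * ((1 - γ) * L s) := by
      intro a0 s0
      rw [hω, hF, hL]
      rw [show (∑ a : A, ∑ s : S,
            pinf a s * (γ * ∑ s' : S, p a s s' * ∑ a' : A, πold s' a' * Ffun p r γ π πold dt a' s'
                - Ffun p r γ π πold dt a s + (1 - γ) * Lfun p r γ π πold s) *
              ratio p γ pinf πold a s a0 s0)
          = ∑ a : A, ∑ s : S, pinf a s * ratio p γ pinf πold a s a0 s0 *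
              (γ * (∑ s' : S, p a s s' * ∑ a' : A, πold s' a' * Ffun p r γ π πold dt a' s')
                - Ffun p r γ π πold dt a s + (1 - γ) * Lfun p r γ π πold s) from
        Finset.sum_congr rfl fun a _ => Finset.sum_congr rfl fun s _ => by ring]
      exact part3_inner hp hold hγ0 hγ1 hpos r π dt a0 s0
    calc (∑ a : A, ∑ s : S, 1 / (1 - γ) *
        (pinf a s * (γ * ∑ s' : S, p a s s' * ∑ a' : A, πold s' a' * F a' s'
            - F a s + (1 - γ) * L s) *
          ∑ a0 : A, ∑ s0 : S, πold s0 a0 * ν s0 * ω a s a0 s0))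
        = 1 / (1 - γ) * ∑ a : A, ∑ s : S,
            (pinf a s * (γ * ∑ s' : S, p a s s' * ∑ a' : A, πold s' a' * F a' s'
                - F a s + (1 - γ) * L s)) *
            (∑ a0 : A, ∑ s0 : S, (πold s0 a0 * ν s0) * ω a s a0 s0) := by
          rw [Finset.mul_sum]
          refine Finset.sum_congr rfl fun a _ => ?_
          rw [Finset.mul_sum]
      _ = 1 / (1 - γ) * ∑ a0 : A, ∑ s0 : S, (πold s0 a0 * ν s0) *
            (∑ a : A, ∑ s : S,
              pinf a s * (γ * ∑ s' : S, p a s s' * ∑ a' : A, πold s' a' * F a' s'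
                  - F a s + (1 - γ) * L s) * ω a s a0 s0) :=
          congrArg _ (sum_exchange_AS _ _ _)
      _ = 1 / (1 - γ) * ∑ a0 : A, ∑ s0 : S, (πold s0 a0 * ν s0) *
            (-((1 - γ) * F a0 s0) + ∑ s : S, dvisit p γ πold s a0 s0 * ((1 - γ) * L s)) :=
          congrArg _ (Finset.sum_congr rfl fun a0 _ => Finset.sum_congr rfl fun s0 _ => by
            rw [inner3 a0 s0])
      _ = ∑ a0 : A, ∑ s0 : S, (πold s0 a0 * ν s0) *
            (-(F a0 s0) + ∑ s : S, dvisit p γ πold s a0 s0 * L s) := by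
          rw [Finset.mul_sum]
          refine Finset.sum_congr rfl fun a0 _ => ?_
          rw [Finset.mul_sum]
          refine Finset.sum_congr rfl fun s0 _ => ?_
          have hdl : (∑ s : S, dvisit p γ πold s a0 s0 * ((1 - γ) * L s))
              = (1 - γ) * ∑ s : S, dvisit p γ πold s a0 s0 * L s := by
            rw [Finset.mul_sum]
            exact Finset.sum_congr rfl fun s _ => by ring
          rw [hdl]
          field_simp
      _ = -(∑ a0 : A, ∑ s0 : S, πold s0 a0 * ν s0 * F a0 s0)
            + ∑ a0 : A, ∑ s0 : S, πold s0 a0 * ν s0 *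
                ∑ s : S, dvisit p γ πold s a0 s0 * L s := by
          rw [show (∑ a0 : A, ∑ s0 : S, (πold s0 a0 * ν s0) *
              (-(F a0 s0) + ∑ s : S, dvisit p γ πold s a0 s0 * L s))
            = ∑ a0 : A, ∑ s0 : S, (-(πold s0 a0 * ν s0 * F a0 s0)
                + πold s0 a0 * ν s0 * ∑ s : S, dvisit p γ πold s a0 s0 * L s) from
            Finset.sum_congr rfl fun a0 _ => Finset.sum_congr rfl fun s0 _ => by ring]
          simp only [Finset.sum_add_distrib, Finset.sum_neg_distrib]
      _ = -C1 + eta1 p r γ ν π πold := by rw [hC1eq, heta]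
  rw [hT1, hT2, hT3]
  ring

end VEPO
end

section
/- Fixed-point identity for centered advantage-type functions under the discounted ratio: let π be a policy and Ã : A × S → ℝ satisfy Σ_{a∈A} π(a|s) Ã(a,s) = 0 for all s ∈ S. Then for every (a,s) ∈ A × S: Ã(a,s) = (1/(1−γ)) Σ_{a'∈A, s'∈S} p_∞(a',s') ω^π(a',s';a,s) Ã(a',s'). -/
namespace VEPO

variable {S A : Type} [Fintype S] [Fintype A] [DecidableEq S] [DecidableEq A]

theorem centered_fixed_point_identity {S A : Type} [Fintype S] [Fintype A] [DecidableEq S] [DecidableEq A]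
    [Nonempty S] [Nonempty A]
    (p : A → S → S → ℝ) (γ : ℝ) (pinf : A → S → ℝ)
    (hp : IsKernel p) (hγ0 : 0 ≤ γ) (hγ1 : γ < 1)
    (hpinf : IsPMF (fun as : A × S => pinf as.1 as.2)) (hpos : ∀ a s, 0 < pinf a s)
    (π : S → A → ℝ) (hπ : IsPolicy π)
    (At : A → S → ℝ) (hAt : ∀ s, ∑ a : A, π s a * At a s = 0) :
    ∀ (a : A) (s : S),
      At a s = 1 / (1 - γ) *
        ∑ a' : A, ∑ s' : S, pinf a' s' * ratio p γ pinf π a' s' a s * At a' s' := by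
  intro a s
  have hγne : (1 - γ) ≠ 0 := by linarith
  have key : ∀ a' s', pinf a' s' * ratio p γ pinf π a' s' a s * At a' s'
      = (1 - γ) * ((if a' = a ∧ s' = s then 1 else 0) * At a' s')
        + (1 - γ) * (π s' a' * At a' s'
            * ∑' t : ℕ, γ ^ (t + 1) * visit p π (t + 1) a s s') := by
    intro a' s'
    have hne := (hpos a' s').ne'
    have htsum : (∑' t : ℕ, γ ^ (t + 1) * (π s' a' * visit p π (t + 1) a s s'))
        = π s' a' * ∑' t : ℕ, γ ^ (t + 1) * visit p π (t + 1) a s s' := by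
      rw [← tsum_mul_left]
      exact tsum_congr fun t => by ring
    unfold ratio
    rw [htsum]
    rw [mul_div_assoc', mul_comm (pinf a' s'), mul_div_assoc, div_self hne, mul_one]
    by_cases h : a' = a ∧ s' = s <;> simp [h] <;> ring
  simp only [key, Finset.sum_add_distrib]
  have h1 : ∑ a' : A, ∑ s' : S,
      (1 - γ) * ((if a' = a ∧ s' = s then 1 else 0) * At a' s') = (1 - γ) * At a s := by
    rw [Finset.sum_comm]
    simp [ite_and, Finset.sum_ite_eq, mul_ite]
  have h2 : ∑ a' : A, ∑ s' : S, (1 - γ) * (π s' a' * At a' s'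
      * ∑' t : ℕ, γ ^ (t + 1) * visit p π (t + 1) a s s') = 0 := by
    rw [Finset.sum_comm]
    refine Finset.sum_eq_zero fun s' _ => ?_
    have : ∑ a' : A, (1 - γ) * (π s' a' * At a' s'
        * ∑' t : ℕ, γ ^ (t + 1) * visit p π (t + 1) a s s')
        = (1 - γ) * (∑' t : ℕ, γ ^ (t + 1) * visit p π (t + 1) a s s')
          * ∑ a' : A, π s' a' * At a' s' := by
      rw [Finset.mul_sum]
      exact Finset.sum_congr rfl fun a' _ => by ring
    rw [this, hAt s', mul_zero]
  rw [h1, h2, add_zero]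
  field_simp

end VEPO
end

section
/- Theorem 1 (stability of trust-region policy updates): suppose there exists C > 0 such that ν(s) ≥ C for all s ∈ S. Let L ≥ 1, let π_old^{(1)}, …, π_old^{(L)} and π_new be policies, let δ > 0, and for each ℓ let m^{(ℓ)} be a probability mass function on S satisfying m^{(ℓ)}(s) ≥ (1−γ) ν(s) for all s ∈ S. If (1/L) Σ_{ℓ=1}^L Σ_{s∈S} m^{(ℓ)}(s) D_KL(π_old^{(ℓ)}(·|s), π_new(·|s)) ≤ δ, then |V(π_new) − (1/L) Σ_{ℓ=1}^L V(π_old^{(ℓ)})| ≤ K √δ, where K > 0 is a constant depending only on γ, C and R_max. -/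
/-!
By the Bellman equation `Q^π(a,s) = r(s,a) + γ Σ_{s'} p(s'|a,s) V^π(s')`, the difference
`V^{π₁}(s) - V^{π₂}(s)` is `Σ_a (π₁ - π₂)(a|s) Q^{π₂}(a,s)` plus `γ` times an average of the
same difference; evaluating at a state where it is largest gives
`|V^{π₁} - V^{π₂}| ≤ max_s ‖π₁(·|s) - π₂(·|s)‖₁ R_max / (1 - γ)²`.
By Cauchy–Schwarz and the Hellinger bound, `‖μ₁ - μ₂‖₁ ≤ 2 √KL(μ₁, μ₂)`. As
`m^{(ℓ)}(s) ≥ (1 - γ) C`, the divergence at each single state is at most `T_ℓ / ((1 - γ) C)`,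
where `T_ℓ = Σ_s m^{(ℓ)}(s) KL(π_old^{(ℓ)}(·|s), π_new(·|s))`; averaging over `ℓ` and concavity
of the square root give the bound with any `K > 2 R_max / ((1 - γ)² √((1 - γ) C))`.
-/

namespace VEPO

open Finset Matrix

theorem IsPMF.abs_sum_mul_le {X : Type} [Fintype X] {w v : X → ℝ} {B : ℝ} (hw : IsPMF w)
    (hv : ∀ x, |v x| ≤ B) : |∑ x, w x * v x| ≤ B :=
  calc |∑ x, w x * v x| ≤ ∑ x, w x * B := by
        refine (abs_sum_le_sum_abs _ _).trans (sum_le_sum fun x _ => ?_)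
        rw [abs_mul, abs_of_nonneg (hw.1 x)]
        exact mul_le_mul_of_nonneg_left (hv x) (hw.1 x)
    _ = B := by rw [← sum_mul, hw.2, one_mul]

theorem abs_le_div_one_sub_of_forall_abs_le {ι : Type*} [Finite ι] [Nonempty ι] {D : ι → ℝ}
    {c γ : ℝ} (hγ : γ < 1) (h : ∀ M, (∀ i, |D i| ≤ M) → ∀ i, |D i| ≤ c + γ * M) (i : ι) :
    |D i| ≤ c / (1 - γ) := by
  obtain ⟨i₀, hi₀⟩ := Finite.exists_max fun i => |D i|
  have hmax := h _ hi₀ i₀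
  rw [le_div_iff₀ (by linarith)]
  nlinarith [mul_le_mul_of_nonneg_right (hi₀ i) (by linarith : 0 ≤ 1 - γ)]

theorem le_sum_mul_div_of_forall_le {ι : Type*} [Fintype ι] {w f : ι → ℝ} {c : ℝ} (hc : 0 < c)
    (hw : ∀ i, c ≤ w i) (hf : ∀ i, 0 ≤ f i) (i : ι) : f i ≤ (∑ j, w j * f j) / c := by
  rw [le_div_iff₀ hc]
  calc f i * c ≤ w i * f i := by nlinarith [mul_le_mul_of_nonneg_right (hw i) (hf i)]
    _ ≤ ∑ j, w j * f j :=
        single_le_sum (fun j _ => mul_nonneg (hc.le.trans (hw j)) (hf j)) (mem_univ i)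

theorem abs_sub_average_le_mul_sqrt {ι : Type*} [Fintype ι] [Nonempty ι] {x c δ : ℝ}
    {y T : ι → ℝ} (hc : 0 ≤ c) (hT : ∀ i, 0 ≤ T i) (hxy : ∀ i, |x - y i| ≤ c * √(T i))
    (hδ : 1 / (Fintype.card ι : ℝ) * ∑ i, T i ≤ δ) :
    |x - 1 / (Fintype.card ι : ℝ) * ∑ i, y i| ≤ c * √δ := by
  set w : ℝ := 1 / Fintype.card ι
  have hw : 0 ≤ w := by positivity
  have hw_sum : ∑ _ : ι, w = 1 := by simp [w, card_univ]
  have hjensen : ∑ i, w * √(T i) ≤ √(∑ i, w * T i) :=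
    Real.strictConcaveOn_sqrt.concaveOn.le_map_sum (fun _ _ => hw) hw_sum fun i _ => hT i
  calc |x - w * ∑ i, y i| = |∑ i, w * (x - y i)| := by
        rw [← mul_sum, sum_sub_distrib, sum_const, card_univ, nsmul_eq_mul, mul_sub, ← mul_assoc,
          one_div_mul_cancel (by simp), one_mul]
    _ ≤ ∑ i, w * (c * √(T i)) := by
        refine (abs_sum_le_sum_abs _ _).trans (sum_le_sum fun i _ => ?_)
        rw [abs_mul, abs_of_nonneg hw]
        exact mul_le_mul_of_nonneg_left (hxy i) hw
    _ = c * ∑ i, w * √(T i) := by rw [mul_sum]; exact sum_congr rfl fun _ _ => by ring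
    _ ≤ c * √δ := by
        gcongr
        exact hjensen.trans (Real.sqrt_le_sqrt (by rwa [← mul_sum]))

theorem _root_.EReal.coe_finset_sum {ι : Type*} (s : Finset ι) (f : ι → ℝ) :
    ((∑ i ∈ s, f i : ℝ) : EReal) = ∑ i ∈ s, (f i : EReal) :=
  map_sum (⟨⟨Real.toEReal, EReal.coe_zero⟩, EReal.coe_add⟩ : ℝ →+ EReal) f s

theorem _root_.EReal.sum_ne_bot {ι : Type*} {s : Finset ι} {f : ι → EReal}
    (hf : ∀ i ∈ s, f i ≠ ⊥) : ∑ i ∈ s, f i ≠ ⊥ := fun h => by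
  obtain ⟨i, hi, hfi⟩ := WithBot.sum_eq_bot_iff.1 h
  exact hf i hi hfi

theorem _root_.EReal.sum_eq_top_of_eq_top {ι : Type*} {s : Finset ι} {f : ι → EReal} {i : ι}
    (hi : i ∈ s) (hfi : f i = ⊤) (hf : ∀ j ∈ s, f j ≠ ⊥) : ∑ j ∈ s, f j = ⊤ := by
  classical
  rw [← add_sum_erase s f hi, hfi, EReal.top_add_iff_ne_bot]
  exact EReal.sum_ne_bot fun j hj => hf j (mem_of_mem_erase hj)

section Divergence

variable {X : Type} [Fintype X]

/-- `DKL` computed in `ℝ`. Where `μ₂ x = 0 < μ₁ x` the term is `μ₁ x * Real.log 0 = 0` rather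
than `⊤`, so the two agree only under absolute continuity. -/
noncomputable def klReal (μ₁ μ₂ : X → ℝ) : ℝ :=
  ∑ x, if μ₁ x = 0 then 0 else μ₁ x * Real.log (μ₁ x / μ₂ x)

theorem sq_sqrt_sub_sqrt_le {x y : ℝ} (hx : 0 ≤ x) (hy : 0 ≤ y) (h : y = 0 → x = 0) :
    (√x - √y) ^ 2 ≤ (if x = 0 then 0 else x * Real.log (x / y)) - x + y := by
  obtain rfl | hx0 := eq_or_ne x 0
  · simp [Real.sq_sqrt hy]
  have hu : 0 < √x := Real.sqrt_pos.2 (lt_of_le_of_ne hx (Ne.symm hx0))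
  have hv : 0 < √y := Real.sqrt_pos.2 (lt_of_le_of_ne hy fun h0 => hx0 (h h0.symm))
  have hlog : 1 - √y / √x ≤ Real.log (√x / √y) := by
    simpa using Real.one_sub_inv_le_log_of_pos (div_pos hu hv)
  have hxy : x / y = (√x / √y) ^ 2 := by rw [div_pow, Real.sq_sqrt hx, Real.sq_sqrt hy]
  have hcross : x * (√y / √x) = √x * √y := by
    field_simp
    rw [Real.sq_sqrt hx]
  rw [if_neg hx0, hxy, Real.log_pow]
  push_cast
  nlinarith [mul_le_mul_of_nonneg_left hlog hx, Real.sq_sqrt hx, Real.sq_sqrt hy]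

theorem sum_sq_sqrt_sub_sqrt_le_klReal {μ₁ μ₂ : X → ℝ} (h₁ : IsPMF μ₁) (h₂ : IsPMF μ₂)
    (hac : ∀ x, μ₂ x = 0 → μ₁ x = 0) :
    ∑ x, (√(μ₁ x) - √(μ₂ x)) ^ 2 ≤ klReal μ₁ μ₂ := by
  have hkl : klReal μ₁ μ₂ = ∑ x,
      ((if μ₁ x = 0 then 0 else μ₁ x * Real.log (μ₁ x / μ₂ x)) - μ₁ x + μ₂ x) := by
    rw [klReal, sum_add_distrib, sum_sub_distrib, h₁.2, h₂.2, sub_add_cancel]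
  rw [hkl]
  exact sum_le_sum fun x _ => sq_sqrt_sub_sqrt_le (h₁.1 x) (h₂.1 x) (hac x)

theorem klReal_nonneg {μ₁ μ₂ : X → ℝ} (h₁ : IsPMF μ₁) (h₂ : IsPMF μ₂)
    (hac : ∀ x, μ₂ x = 0 → μ₁ x = 0) : 0 ≤ klReal μ₁ μ₂ :=
  (sum_nonneg fun _ _ => sq_nonneg _).trans (sum_sq_sqrt_sub_sqrt_le_klReal h₁ h₂ hac)

theorem sum_abs_sub_le_two_mul_sqrt_klReal {μ₁ μ₂ : X → ℝ} (h₁ : IsPMF μ₁) (h₂ : IsPMF μ₂)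
    (hac : ∀ x, μ₂ x = 0 → μ₁ x = 0) :
    ∑ x, |μ₁ x - μ₂ x| ≤ 2 * √(klReal μ₁ μ₂) := by
  have hfactor (x : X) : |μ₁ x - μ₂ x| = |√(μ₁ x) - √(μ₂ x)| * (√(μ₁ x) + √(μ₂ x)) := by
    rw [← abs_of_nonneg (by positivity : 0 ≤ √(μ₁ x) + √(μ₂ x)), ← abs_mul, mul_comm, ← sq_sub_sq,
      Real.sq_sqrt (h₁.1 x), Real.sq_sqrt (h₂.1 x)]
  have hsum : ∑ x, (√(μ₁ x) + √(μ₂ x)) ^ 2 ≤ 2 ^ 2 := by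
    calc ∑ x, (√(μ₁ x) + √(μ₂ x)) ^ 2 ≤ ∑ x, 2 * (μ₁ x + μ₂ x) := sum_le_sum fun x _ => by
          nlinarith [sq_nonneg (√(μ₁ x) - √(μ₂ x)), Real.sq_sqrt (h₁.1 x), Real.sq_sqrt (h₂.1 x)]
      _ = 2 ^ 2 := by rw [← mul_sum, sum_add_distrib, h₁.2, h₂.2]; norm_num
  calc ∑ x, |μ₁ x - μ₂ x|
      ≤ √(∑ x, |√(μ₁ x) - √(μ₂ x)| ^ 2) * √(∑ x, (√(μ₁ x) + √(μ₂ x)) ^ 2) := by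
        simp only [hfactor]
        exact Real.sum_mul_le_sqrt_mul_sqrt _ _ _
    _ ≤ √(klReal μ₁ μ₂) * 2 := by
        simp only [sq_abs]
        gcongr
        · exact sum_sq_sqrt_sub_sqrt_le_klReal h₁ h₂ hac
        · exact Real.sqrt_le_iff.2 ⟨zero_le_two, hsum⟩
    _ = 2 * √(klReal μ₁ μ₂) := mul_comm _ _

theorem DKL_ne_bot (μ₁ μ₂ : X → ℝ) : DKL μ₁ μ₂ ≠ ⊥ :=
  EReal.sum_ne_bot fun x _ => by split_ifs <;> simp [-EReal.coe_mul]

theorem DKL_eq_top {μ₁ μ₂ : X → ℝ} {x : X} (h₁ : μ₁ x ≠ 0) (h₂ : μ₂ x = 0) :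
    DKL μ₁ μ₂ = ⊤ :=
  EReal.sum_eq_top_of_eq_top (mem_univ x) (by rw [if_neg h₁, if_pos h₂])
    fun y _ => by split_ifs <;> simp [-EReal.coe_mul]

theorem DKL_eq_klReal {μ₁ μ₂ : X → ℝ} (hac : ∀ x, μ₂ x = 0 → μ₁ x = 0) :
    DKL μ₁ μ₂ = klReal μ₁ μ₂ := by
  rw [DKL, klReal, EReal.coe_finset_sum]
  refine sum_congr rfl fun x _ => ?_
  by_cases h₁ : μ₁ x = 0
  · simp [h₁]
  · rw [if_neg h₁, if_neg h₁, if_neg (mt (hac x) h₁)]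

variable {ι S : Type} [Fintype ι] [Fintype S] {m : ι → S → ℝ} {μ : ι → S → X → ℝ}
  {ν : S → X → ℝ}

theorem absCont_of_sum_sum_mul_DKL_ne_top (hm : ∀ i s, 0 < m i s)
    (h : ∑ i, ∑ s, (m i s : EReal) * DKL (μ i s) (ν s) ≠ ⊤) (i : ι) (s : S) (x : X)
    (hx : ν s x = 0) : μ i s x = 0 := by
  by_contra h₀
  have hterm (i : ι) (s : S) : (m i s : EReal) * DKL (μ i s) (ν s) ≠ ⊥ :=
    (EReal.mul_ne_bot _ _).2 ⟨Or.inl (EReal.coe_ne_bot _), Or.inr (DKL_ne_bot _ _),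
      Or.inl (EReal.coe_ne_top _), Or.inl (EReal.coe_nonneg.2 (hm i s).le)⟩
  refine h (EReal.sum_eq_top_of_eq_top (mem_univ i)
    (EReal.sum_eq_top_of_eq_top (mem_univ s) ?_ fun s _ => hterm i s) fun i _ => ?_)
  · rw [DKL_eq_top h₀ hx, EReal.coe_mul_top_of_pos (hm i s)]
  · exact EReal.sum_ne_bot fun s _ => hterm i s

theorem absCont_and_mul_sum_sum_mul_klReal_le {c δ : ℝ} (hc : 0 < c) (hm : ∀ i s, 0 < m i s)
    (h : (c : EReal) * ∑ i, ∑ s, (m i s : EReal) * DKL (μ i s) (ν s) ≤ δ) :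
    (∀ i s x, ν s x = 0 → μ i s x = 0) ∧
      c * ∑ i, ∑ s, m i s * klReal (μ i s) (ν s) ≤ δ := by
  have hac := absCont_of_sum_sum_mul_DKL_ne_top hm fun htop => by
    rw [htop, EReal.coe_mul_top_of_pos hc, top_le_iff] at h
    exact EReal.coe_ne_top δ h
  refine ⟨hac, ?_⟩
  simp only [DKL_eq_klReal (hac _ _), ← EReal.coe_mul, ← EReal.coe_finset_sum] at h
  exact EReal.coe_le_coe_iff.1 h

end Divergence

section MDP

variable {S A : Type} [Fintype S] [Fintype A] [DecidableEq S]
  {p : A → S → S → ℝ} {r : S → A → ℝ} {π : S → A → ℝ} {γ Rmax : ℝ}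

def meanReward (r : S → A → ℝ) (π : S → A → ℝ) (s : S) : ℝ :=
  ∑ a, π s a * r s a

def stateTransition (p : A → S → S → ℝ) (π : S → A → ℝ) : Matrix S S ℝ :=
  fun s s' => ∑ a, π s a * p a s s'

def rewardAt (p : A → S → S → ℝ) (r : S → A → ℝ) (π : S → A → ℝ) (t : ℕ) : S → ℝ :=
  stateTransition p π ^ t *ᵥ meanReward r π

noncomputable def discountedReward (p : A → S → S → ℝ) (r : S → A → ℝ) (γ : ℝ)
    (π : S → A → ℝ) (s : S) : ℝ :=
  ∑' t, γ ^ t * rewardAt p r π t s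

theorem visit_succ (t : ℕ) (a : A) (s : S) :
    visit p π (t + 1) a s = vecMul (p a s) (stateTransition p π ^ t) := by
  induction t with
  | zero => rw [pow_zero, vecMul_one]; rfl
  | succ t ih => rw [pow_succ, ← vecMul_vecMul, ← ih]; rfl

theorem rewardAt_succ (t : ℕ) (s : S) :
    rewardAt p r π (t + 1) s = ∑ a, π s a * ∑ s', p a s s' * rewardAt p r π t s' := by
  have hmul : rewardAt p r π (t + 1) = stateTransition p π *ᵥ rewardAt p r π t := by
    rw [rewardAt, rewardAt, pow_succ', mulVec_mulVec]
  simp only [hmul, mulVec, dotProduct, stateTransition, sum_mul, mul_sum, mul_assoc]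
  rw [sum_comm]

theorem abs_rewardAt_le (hp : IsKernel p) (hπ : IsPolicy π) (hr : ∀ s a, |r s a| ≤ Rmax)
    (t : ℕ) (s : S) : |rewardAt p r π t s| ≤ Rmax := by
  induction t generalizing s with
  | zero => simpa [rewardAt, meanReward] using (hπ s).abs_sum_mul_le (hr s)
  | succ t ih =>
    rw [rewardAt_succ]
    exact (hπ s).abs_sum_mul_le fun a => (hp a s).abs_sum_mul_le ih

theorem Qfun_eq_tsum_rewardAt (a : A) (s : S) :
    Qfun p r γ π a s =
      r s a + ∑' t : ℕ, γ ^ (t + 1) * ∑ s', p a s s' * rewardAt p r π t s' := by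
  simp only [Qfun, visit_succ]
  congr! 4 with t
  exact (dotProduct_mulVec (p a s) _ (meanReward r π)).symm

variable (hp : IsKernel p) (hπ : IsPolicy π) (hr : ∀ s a, |r s a| ≤ Rmax)
  (hγ0 : 0 ≤ γ) (hγ1 : γ < 1)
include hp hπ hr hγ0

theorem norm_discounted_rewardAt_le (t : ℕ) (s : S) :
    ‖γ ^ t * rewardAt p r π t s‖ ≤ γ ^ t * Rmax := by
  rw [Real.norm_eq_abs, abs_mul, abs_pow, abs_of_nonneg hγ0]
  exact mul_le_mul_of_nonneg_left (abs_rewardAt_le hp hπ hr t s) (pow_nonneg hγ0 t)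

include hγ1

theorem abs_discountedReward_le (s : S) : |discountedReward p r γ π s| ≤ Rmax / (1 - γ) := by
  have h := tsum_of_norm_bounded ((hasSum_geometric_of_lt_one hγ0 hγ1).mul_right Rmax)
    (norm_discounted_rewardAt_le hp hπ hr hγ0 · s)
  rwa [Real.norm_eq_abs, inv_mul_eq_div] at h

theorem hasSum_discountedReward (s : S) :
    HasSum (fun t => γ ^ t * rewardAt p r π t s) (discountedReward p r γ π s) :=
  (Summable.of_norm_bounded ((summable_geometric_of_lt_one hγ0 hγ1).mul_right Rmax)
    (norm_discounted_rewardAt_le hp hπ hr hγ0 · s)).hasSum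

theorem hasSum_discounted_rewardAt_next (a : A) (s : S) :
    HasSum (fun t => γ ^ (t + 1) * ∑ s', p a s s' * rewardAt p r π t s')
      (γ * ∑ s', p a s s' * discountedReward p r γ π s') := by
  have e : (fun t => γ ^ (t + 1) * ∑ s', p a s s' * rewardAt p r π t s') =
      fun t => ∑ s', γ * p a s s' * (γ ^ t * rewardAt p r π t s') := by
    ext t
    rw [mul_sum]
    exact sum_congr rfl fun _ _ => by ring
  rw [e, mul_sum]
  refine hasSum_sum fun s' _ => ?_
  rw [← mul_assoc]
  exact (hasSum_discountedReward hp hπ hr hγ0 hγ1 s').mul_left _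

theorem discountedReward_eq (s : S) :
    discountedReward p r γ π s =
      ∑ a, π s a * (r s a + γ * ∑ s', p a s s' * discountedReward p r γ π s') := by
  have htail := hasSum_sum (s := univ) fun a _ =>
    (hasSum_discounted_rewardAt_next hp hπ hr hγ0 hγ1 a s).mul_left (π s a)
  have e : (fun t => γ ^ (t + 1) * rewardAt p r π (t + 1) s) =
      fun t => ∑ a, π s a * (γ ^ (t + 1) * ∑ s', p a s s' * rewardAt p r π t s') := by
    ext t
    rw [rewardAt_succ, mul_sum]
    exact sum_congr rfl fun _ _ => by ring
  rw [discountedReward, (hasSum_discountedReward hp hπ hr hγ0 hγ1 s).summable.tsum_eq_zero_add, e,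
    htail.tsum_eq, pow_zero, one_mul, rewardAt, pow_zero, one_mulVec, meanReward,
    ← sum_add_distrib]
  exact sum_congr rfl fun _ _ => by ring

theorem Qfun_eq_discountedReward (a : A) (s : S) :
    Qfun p r γ π a s = r s a + γ * ∑ s', p a s s' * discountedReward p r γ π s' := by
  rw [Qfun_eq_tsum_rewardAt, (hasSum_discounted_rewardAt_next hp hπ hr hγ0 hγ1 a s).tsum_eq]

theorem Vfun_eq_discountedReward : Vfun p r γ π = discountedReward p r γ π := by
  ext s
  rw [Vfun, discountedReward_eq hp hπ hr hγ0 hγ1 s]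
  simp only [Qfun_eq_discountedReward hp hπ hr hγ0 hγ1]

theorem Qfun_eq_bellman (a : A) (s : S) :
    Qfun p r γ π a s = r s a + γ * ∑ s', p a s s' * Vfun p r γ π s' := by
  rw [Qfun_eq_discountedReward hp hπ hr hγ0 hγ1, Vfun_eq_discountedReward hp hπ hr hγ0 hγ1]

theorem abs_Vfun_le (s : S) : |Vfun p r γ π s| ≤ Rmax / (1 - γ) := by
  rw [Vfun_eq_discountedReward hp hπ hr hγ0 hγ1]
  exact abs_discountedReward_le hp hπ hr hγ0 hγ1 s

theorem abs_Qfun_le (a : A) (s : S) : |Qfun p r γ π a s| ≤ Rmax / (1 - γ) := by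
  have hPV : |∑ s', p a s s' * Vfun p r γ π s'| ≤ Rmax / (1 - γ) :=
    (hp a s).abs_sum_mul_le (abs_Vfun_le hp hπ hr hγ0 hγ1)
  calc |Qfun p r γ π a s| ≤ |r s a| + γ * |∑ s', p a s s' * Vfun p r γ π s'| := by
        rw [Qfun_eq_bellman hp hπ hr hγ0 hγ1]
        exact (abs_add_le _ _).trans_eq (by rw [abs_mul, abs_of_nonneg hγ0])
    _ ≤ Rmax + γ * (Rmax / (1 - γ)) := add_le_add (hr s a) (by gcongr)
    _ = Rmax / (1 - γ) := by field_simp [(sub_pos.2 hγ1).ne']; ring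

end MDP

section PolicyComparison

variable {S A : Type} [Fintype S] [Fintype A] [DecidableEq S]
  {p : A → S → S → ℝ} {r : S → A → ℝ} {π₁ π₂ : S → A → ℝ} {γ Rmax : ℝ}
  (hp : IsKernel p) (hπ₁ : IsPolicy π₁) (hπ₂ : IsPolicy π₂) (hr : ∀ s a, |r s a| ≤ Rmax)
  (hγ0 : 0 ≤ γ) (hγ1 : γ < 1)
include hp hπ₁ hπ₂ hr hγ0 hγ1

theorem Vfun_sub_Vfun (s : S) :
    Vfun p r γ π₁ s - Vfun p r γ π₂ s =
      ∑ a, (π₁ s a - π₂ s a) * Qfun p r γ π₂ a s +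
        γ * ∑ a, π₁ s a * ∑ s', p a s s' * (Vfun p r γ π₁ s' - Vfun p r γ π₂ s') := by
  have hQ (a : A) : Qfun p r γ π₁ a s = Qfun p r γ π₂ a s +
      γ * ∑ s', p a s s' * (Vfun p r γ π₁ s' - Vfun p r γ π₂ s') := by
    rw [Qfun_eq_bellman hp hπ₁ hr hγ0 hγ1, Qfun_eq_bellman hp hπ₂ hr hγ0 hγ1]
    simp only [mul_sub, sum_sub_distrib]
    ring
  rw [Vfun, Vfun]
  simp_rw [hQ]
  rw [mul_sum, ← sum_sub_distrib, ← sum_add_distrib]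
  exact sum_congr rfl fun a _ => by ring

theorem abs_Vfun_sub_le [Nonempty S] (hR : 0 ≤ Rmax) {ε : ℝ}
    (hε : ∀ s, ∑ a, |π₁ s a - π₂ s a| ≤ ε) (s : S) :
    |Vfun p r γ π₁ s - Vfun p r γ π₂ s| ≤ ε * Rmax / (1 - γ) ^ 2 := by
  have hB : 0 ≤ Rmax / (1 - γ) := div_nonneg hR (by linarith)
  calc |Vfun p r γ π₁ s - Vfun p r γ π₂ s| ≤ ε * (Rmax / (1 - γ)) / (1 - γ) := by
        refine abs_le_div_one_sub_of_forall_abs_le hγ1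
          (D := fun s => Vfun p r γ π₁ s - Vfun p r γ π₂ s) (fun M hM s => ?_) s
        rw [Vfun_sub_Vfun hp hπ₁ hπ₂ hr hγ0 hγ1]
        refine (abs_add_le _ _).trans (add_le_add ?_ ?_)
        · calc _ ≤ ∑ a, |π₁ s a - π₂ s a| * (Rmax / (1 - γ)) := by
                refine (abs_sum_le_sum_abs _ _).trans (sum_le_sum fun a _ => ?_)
                rw [abs_mul]
                exact mul_le_mul_of_nonneg_left (abs_Qfun_le hp hπ₂ hr hγ0 hγ1 a s)
                  (abs_nonneg _)
            _ ≤ ε * (Rmax / (1 - γ)) := by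
                rw [← sum_mul]
                exact mul_le_mul_of_nonneg_right (hε s) hB
        · rw [abs_mul, abs_of_nonneg hγ0]
          exact mul_le_mul_of_nonneg_left
            ((hπ₁ s).abs_sum_mul_le fun a => (hp a s).abs_sum_mul_le hM) hγ0
    _ = ε * Rmax / (1 - γ) ^ 2 := by rw [sq, ← div_div]; ring

theorem abs_IntV_sub_le [Nonempty S] (hR : 0 ≤ Rmax) {ε : ℝ}
    (hε : ∀ s, ∑ a, |π₁ s a - π₂ s a| ≤ ε) {ν : S → ℝ} (hν : IsPMF ν) :
    |IntV p r γ ν π₁ - IntV p r γ ν π₂| ≤ ε * Rmax / (1 - γ) ^ 2 := by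
  rw [IntV, IntV, ← sum_sub_distrib]
  simp only [← mul_sub]
  exact hν.abs_sum_mul_le (abs_Vfun_sub_le hp hπ₁ hπ₂ hr hγ0 hγ1 hR hε)

theorem abs_IntV_sub_le_mul_sqrt_sum_mul_klReal [Nonempty S] (hR : 0 ≤ Rmax) {ν : S → ℝ}
    (hν : IsPMF ν) (hac : ∀ s a, π₁ s a = 0 → π₂ s a = 0) {w : S → ℝ} {k : ℝ} (hk : 0 < k)
    (hw : ∀ s, k ≤ w s) :
    |IntV p r γ ν π₁ - IntV p r γ ν π₂| ≤
      2 * Rmax / ((1 - γ) ^ 2 * √k) * √(∑ s, w s * klReal (π₂ s) (π₁ s)) := by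
  have hkl (s : S) : klReal (π₂ s) (π₁ s) ≤ (∑ s, w s * klReal (π₂ s) (π₁ s)) / k :=
    le_sum_mul_div_of_forall_le hk hw (fun s => klReal_nonneg (hπ₂ s) (hπ₁ s) (hac s)) s
  have hl1 (s : S) : ∑ a, |π₁ s a - π₂ s a| ≤ 2 * √((∑ s, w s * klReal (π₂ s) (π₁ s)) / k) := by
    simp only [abs_sub_comm (π₁ s _)]
    exact (sum_abs_sub_le_two_mul_sqrt_klReal (hπ₂ s) (hπ₁ s) (hac s)).trans
      (by gcongr; exact hkl s)
  refine (abs_IntV_sub_le hp hπ₁ hπ₂ hr hγ0 hγ1 hR hl1 hν).trans_eq ?_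
  rw [Real.sqrt_div' _ hk.le]
  field_simp

end PolicyComparison

theorem trust_region_stability (γ C Rmax : ℝ)
    (hγ0 : 0 ≤ γ) (hγ1 : γ < 1) (hC : 0 < C) (hR : 0 ≤ Rmax) :
    ∃ K : ℝ, 0 < K ∧
      ∀ (S A : Type) [Fintype S] [Fintype A] [DecidableEq S] [DecidableEq A]
        [Nonempty S] [Nonempty A],
      ∀ (p : A → S → S → ℝ) (r : S → A → ℝ) (ν : S → ℝ),
        IsKernel p → (∀ s a, |r s a| ≤ Rmax) → IsPMF ν → (∀ s, C ≤ ν s) →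
      ∀ (L : ℕ), 1 ≤ L →
      ∀ (πold : Fin L → S → A → ℝ) (πnew : S → A → ℝ),
        (∀ ℓ, IsPolicy (πold ℓ)) → IsPolicy πnew →
      ∀ (δ : ℝ), 0 < δ →
      ∀ (m : Fin L → S → ℝ),
        (∀ ℓ, IsPMF (m ℓ)) → (∀ ℓ s, (1 - γ) * ν s ≤ m ℓ s) →
        (((1 / (L : ℝ) : ℝ) : EReal) *
            ∑ ℓ : Fin L, ∑ s : S, ((m ℓ s : ℝ) : EReal) * DKL (πold ℓ s) (πnew s)
          ≤ ((δ : ℝ) : EReal)) →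
        |IntV p r γ ν πnew - (1 / (L : ℝ)) * ∑ ℓ : Fin L, IntV p r γ ν (πold ℓ)| ≤
          K * Real.sqrt δ := by
  have h1γ : 0 < 1 - γ := sub_pos.2 hγ1
  set c := 2 * Rmax / ((1 - γ) ^ 2 * √((1 - γ) * C))
  have hc : 0 ≤ c := div_nonneg (by linarith) (by positivity)
  refine ⟨c + 1, by linarith, ?_⟩
  intro S A _ _ _ _ _ _ p r ν hp hr hν hνC L hL πold πnew hπold hπnew δ hδ m hm hmν hKL
  have : Nonempty (Fin L) := ⟨⟨0, hL⟩⟩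
  have hmC (ℓ : Fin L) (s : S) : (1 - γ) * C ≤ m ℓ s :=
    (mul_le_mul_of_nonneg_left (hνC s) h1γ.le).trans (hmν ℓ s)
  obtain ⟨hac, hT⟩ := absCont_and_mul_sum_sum_mul_klReal_le (by positivity)
    (fun ℓ s => (mul_pos h1γ hC).trans_le (hmC ℓ s)) hKL
  have hV (ℓ : Fin L) := abs_IntV_sub_le_mul_sqrt_sum_mul_klReal hp hπnew (hπold ℓ) hr hγ0 hγ1
    hR hν (hac ℓ) (mul_pos h1γ hC) (hmC ℓ)
  have hT_nonneg (ℓ : Fin L) : 0 ≤ ∑ s, m ℓ s * klReal (πold ℓ s) (πnew s) :=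
    sum_nonneg fun s _ => mul_nonneg ((hm ℓ).1 s) (klReal_nonneg (hπold ℓ s) (hπnew s) (hac ℓ s))
  have := abs_sub_average_le_mul_sqrt hc hT_nonneg hV (by simpa using hT)
  simp only [Fintype.card_fin] at this
  exact this.trans (by gcongr; linarith)

end VEPO
end
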